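/- arXiv:1603.05773 — 9 statements merged into one kernel-verified Lean document; each statement's English description precedes it below -/
import Mathlib

section
/- Let 𝔽 be a field, let L_{ε,φ}(λ) ∈ 𝔽[λ]^{ε×(ε+1)} be a dual basis for a family φ = (φ_0,…,φ_ε) and L_{η,ψ}(λ) ∈ 𝔽[λ]^{η×(η+1)} a dual basis for a family ψ = (ψ_0,…,ψ_η). Let w ∈ 𝔽^{η+1} be a constant vector such that wᵀ·π_{η,ψ}(λ) is a nonzero constant, and let A ∈ 𝔽^{(ε+1)×(ε+1)} be invertible. Set k := (ε+1)(η+1) − 1 and L(λ) := [[A ⊗ L_{η,ψ}(λ)],[L_{ε,φ}(λ) ⊗ wᵀ]]. Then: (i) L(λ) has k rows and k+1 columns and L(λ)·(π_{ε,φ}(λ) ⊗ π_{η,ψ}(λ)) = 0 identically; (ii) L(λ₀) has rank k for every λ₀ ∈ 𝔽. In particular, L(λ) is a dual basis for the product family whose coefficient vector is π_{ε,φ}(λ) ⊗ π_{η,ψ}(λ). -/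
/-!
Identity (i) is the mixed-product rule `(M ⊗ N)(u ⊗ v) = Mu ⊗ Nv`: each block row of `L`
has a factor annihilating `π_φ` or `π_ψ`.

For (ii), write a left-kernel vector of `L(λ₀)` as a pair `(X, y)`. Its product with `L(λ₀)` is
the matrix `L_ψ(λ₀)ᵀ X A + w (y L_φ(λ₀))`. Pairing with `π_ψ(λ₀)`, which `L_ψ(λ₀)` annihilates
and which `w` sends to the nonzero constant, leaves `y L_φ(λ₀) = 0`, so `y = 0` by the full row
rank of `L_φ(λ₀)`. What remains is `L_ψ(λ₀)ᵀ X A = 0`, and `X = 0` follows from the invertibility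
of `A` and the full row rank of `L_ψ(λ₀)`.
-/

open Polynomial Matrix
open scoped Kronecker

namespace PaperLin

variable {F : Type*} [Field F]

/-- The `k × (k+1)` matrix pencil `L` is a (full row-rank, linear) dual basis
for the polynomial vector `π`: its entries have degree at most 1,
`L(λ)·π(λ) = 0` identically, and `L(λ₀)` has rank `k` for every `λ₀ ∈ F`. -/
def IsDualBasis {k : ℕ} (L : Matrix (Fin k) (Fin (k + 1)) (Polynomial F))
    (π : Fin (k + 1) → Polynomial F) : Prop :=
  (∀ i j, (L i j).degree ≤ 1) ∧
  L.mulVec π = 0 ∧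
  ∀ x : F, (L.map (Polynomial.eval x)).rank = k

end PaperLin

namespace Matrix

variable {K : Type*} [Field K]

theorem rank_eq_card_iff_vecMul_injective {m n : Type*} [Fintype m] [Fintype n]
    (M : Matrix m n K) : M.rank = Fintype.card m ↔ Function.Injective M.vecMul := by
  rw [vecMul_injective_iff, linearIndependent_iff_card_eq_finrank_span, Set.finrank,
    ← rank_eq_finrank_span_row, eq_comm]

theorem eq_zero_of_mul_eq_zero_of_vecMul_injective {l m n : Type*} [Fintype m]
    {P : Matrix m n K} (hP : Function.Injective P.vecMul) {X : Matrix l m K} (h : X * P = 0) :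
    X = 0 :=
  funext fun i => hP <| (mul_apply_eq_vecMul X P i).symm.trans <|
    (congrFun h i).trans (zero_vecMul P).symm

theorem kronecker_mulVec_prodMul {R l m n p : Type*} [CommSemiring R] [Fintype m] [Fintype p]
    (M : Matrix l m R) (N : Matrix n p R) (u : m → R) (v : p → R) :
    (M ⊗ₖ N) *ᵥ (fun q => u q.1 * v q.2) = fun i => (M *ᵥ u) i.1 * (N *ᵥ v) i.2 := by
  ext ⟨i, j⟩
  simp only [mulVec, dotProduct, Fintype.sum_prod_type, kroneckerMap_apply, Finset.sum_mul_sum,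
    mul_mul_mul_comm]

theorem fromRows_kronecker_vecMul_injective {ι m n m' : Type*} [Fintype ι] [Fintype m]
    [Fintype n] [Fintype m'] [DecidableEq ι] {A : Matrix ι ι K} (hA : IsUnit A)
    {P : Matrix m n K} (hP : Function.Injective P.vecMul)
    {Q : Matrix m' ι K} (hQ : Function.Injective Q.vecMul)
    {z w : n → K} (hPz : P *ᵥ z = 0) (hwz : w ⬝ᵥ z ≠ 0) :
    Function.Injective (fromRows (A ⊗ₖ P) (Q ⊗ₖ replicateRow Unit w)).vecMul := by
  rw [← coe_vecMulLinear, injective_iff_map_eq_zero]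
  intro v hv
  replace hv : v ᵥ* fromRows (A ⊗ₖ P) (Q ⊗ₖ replicateRow Unit w) = 0 := hv
  obtain ⟨X, hX⟩ := vec_bijective.surjective (v ∘ Sum.inl)
  obtain ⟨Y, hY⟩ := vec_bijective.surjective (v ∘ Sum.inr)
  have hXY : Pᵀ * X * A + (replicateRow Unit w)ᵀ * Y * Q = 0 := by
    rw [vecMul_fromRows, ← hX, ← hY, vec_vecMul_kronecker, vec_vecMul_kronecker, ← vec_add] at hv
    exact vec_inj.mp (hv.trans vec_zero.symm)
  have hY0 : Y = 0 := by
    have h := congrArg (z ᵥ* ·) hXY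
    simp only [vecMul_add, ← vecMul_vecMul, vecMul_transpose, hPz, zero_vecMul, zero_add,
      replicateRow_mulVec_eq_const, vecMul_zero] at h
    have hconst : Function.const Unit (w ⬝ᵥ z) ᵥ* Y = (w ⬝ᵥ z) • Y () := by
      ext
      simp [vecMul, dotProduct]
    rw [hconst, smul_vecMul, smul_eq_zero, or_iff_right hwz] at h
    ext ⟨⟩ j
    exact congrFun (hQ (h.trans (zero_vecMul Q).symm)) j
  rw [hY0, Matrix.mul_zero, Matrix.zero_mul, add_zero] at hXY
  have hX0 : X = 0 := by
    have hPX := eq_zero_of_mul_eq_zero_of_vecMul_injective (vecMul_injective_iff_isUnit.mpr hA) hXY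
    rw [← transpose_eq_zero, transpose_mul, transpose_transpose] at hPX
    exact transpose_eq_zero.mp (eq_zero_of_mul_eq_zero_of_vecMul_injective hP hPX)
  ext (i | i)
  · simpa [hX0] using (congrFun hX i).symm
  · simpa [hY0] using (congrFun hY i).symm

end Matrix

namespace PaperLin

variable {F : Type*} [Field F]

namespace IsDualBasis

variable {k : ℕ} {L : Matrix (Fin k) (Fin (k + 1)) F[X]} {π : Fin (k + 1) → F[X]}

theorem mulVec_eval_eq_zero (hL : IsDualBasis L π) (x : F) :
    L.map (eval x) *ᵥ (fun i => (π i).eval x) = 0 := by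
  ext i
  simpa [hL.2.1, Function.comp_def] using (RingHom.map_mulVec (evalRingHom x) L π i).symm

theorem vecMul_eval_injective (hL : IsDualBasis L π) (x : F) :
    Function.Injective (L.map (eval x)).vecMul :=
  (rank_eq_card_iff_vecMul_injective _).mp (by simpa using hL.2.2 x)

end IsDualBasis

/-- The product dual basis `L = [[A ⊗ L_ψ],[L_φ ⊗ wᵀ]]` is a dual basis for
the product family `φ ⊗ ψ`. -/
theorem statement1 (ε η : ℕ)
    (φ : Fin (ε + 1) → Polynomial F) (ψ : Fin (η + 1) → Polynomial F)
    (Lφ : Matrix (Fin ε) (Fin (ε + 1)) (Polynomial F))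
    (Lψ : Matrix (Fin η) (Fin (η + 1)) (Polynomial F))
    (hφ : IsDualBasis Lφ fun i => φ i.rev)
    (hψ : IsDualBasis Lψ fun i => ψ i.rev)
    (w : Fin (η + 1) → F)
    (hw : ∃ c : F, c ≠ 0 ∧ ∑ i, Polynomial.C (w i) * ψ i.rev = Polynomial.C c)
    (A : Matrix (Fin (ε + 1)) (Fin (ε + 1)) F) (hA : IsUnit A) :
    let L : Matrix ((Fin (ε + 1) × Fin η) ⊕ (Fin ε × Unit))
        (Fin (ε + 1) × Fin (η + 1)) (Polynomial F) :=
      Matrix.of (Sum.elim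
        (fun p q => Polynomial.C (A p.1 q.1) * Lψ p.2 q.2)
        (fun p q => Lφ p.1 q.1 * Polynomial.C (w q.2)))
    Fintype.card ((Fin (ε + 1) × Fin η) ⊕ (Fin ε × Unit)) = (ε + 1) * (η + 1) - 1 ∧
    Fintype.card (Fin (ε + 1) × Fin (η + 1)) = (ε + 1) * (η + 1) ∧
    L.mulVec (fun q => φ q.1.rev * ψ q.2.rev) = 0 ∧
    ∀ x : F, (L.map (Polynomial.eval x)).rank = (ε + 1) * (η + 1) - 1 := by
  intro L
  obtain ⟨c, hc, hwψ⟩ := hw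
  have hcard :
      Fintype.card ((Fin (ε + 1) × Fin η) ⊕ (Fin ε × Unit)) = (ε + 1) * (η + 1) - 1 := by
    simp only [Fintype.card_sum, Fintype.card_prod, Fintype.card_fin, Fintype.card_unit,
      Nat.mul_succ]
    omega
  have hL : L = fromRows (A.map C ⊗ₖ Lψ) (Lφ ⊗ₖ replicateRow Unit (C ∘ w)) := rfl
  refine ⟨hcard, by simp, ?_, fun x => ?_⟩
  · simp only [hL, fromRows_mulVec, kronecker_mulVec_prodMul _ _ (fun i : Fin (ε + 1) => φ i.rev)
      (fun i : Fin (η + 1) => ψ i.rev), hψ.2.1, hφ.2.1]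
    ext (_ | _) <;> simp
  · have hLx : L.map (eval x) =
        fromRows (A ⊗ₖ Lψ.map (eval x)) (Lφ.map (eval x) ⊗ₖ replicateRow Unit w) := by
      ext (_ | _) _ <;> simp [L]
    have hwψx : w ⬝ᵥ (fun i => (ψ i.rev).eval x) = c := by
      simpa [dotProduct, eval_finsetSum] using congrArg (eval x) hwψ
    rw [hLx, ← hcard, rank_eq_card_iff_vecMul_injective]
    exact fromRows_kronecker_vecMul_injective hA (hψ.vecMul_eval_injective x)
      (hφ.vecMul_eval_injective x) (hψ.mulVec_eval_eq_zero x) (hwψx ▸ hc)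

end PaperLin
end

section
/- Let 𝔽 be an infinite field. Let L_{ε,φ}(λ) be a dual basis for a family φ = (φ_0,…,φ_ε) and L_{η,ψ}(λ) a dual basis for a family ψ = (ψ_0,…,ψ_η), and assume π_{ε,φ}(λ₀) ≠ 0 and π_{η,ψ}(λ₀) ≠ 0 for every λ₀ ∈ 𝔽. Let A ∈ 𝔽^{k₁×(ε+1)} and B ∈ 𝔽^{k₂×(η+1)} have full row rank, and define M(λ) := [[A ⊗ L_{η,ψ}(λ)],[L_{ε,φ}(λ) ⊗ B]]. If the polynomial vector A·π_{ε,φ}(λ) is not identically zero, or the polynomial vector B·π_{η,ψ}(λ) is not identically zero, then there exists λ₀ ∈ 𝔽 such that the right kernel of M(λ₀) has dimension at least 1 + (ε+1−k₁)(η+1−k₂). -/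
/-!
Choose `λ₀` at which `A·π_φ(λ₀) ≠ 0` (or `B·π_ψ(λ₀) ≠ 0`); this is possible because a nonzero
polynomial over an infinite field has a non-root. Since `L_φ(λ₀)·p = 0` and `L_ψ(λ₀)·q = 0` for
`p = π_φ(λ₀)`, `q = π_ψ(λ₀)`, the vector `p ⊗ q` lies in the kernel of `M(λ₀)`, and so does
`ker A ⊗ ker B`, of dimension `(ε+1-k₁)(η+1-k₂)`. The map `A ⊗ I` kills `ker A ⊗ ker B` but sends
`p ⊗ q` to `Ap ⊗ q ≠ 0` (symmetrically `I ⊗ B`), so `p ⊗ q` adds one more dimension.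
-/

open Polynomial Matrix

namespace PaperLin

variable {F : Type*} [Field F]

open scoped Kronecker

section Kronecker

variable {R : Type*} {ι κ k l m n : Type*}

def kron [Mul R] (u : m → R) (v : n → R) : m × n → R := fun p => u p.1 * v p.2

lemma kron_eq_zero_iff [MulZeroClass R] [NoZeroDivisors R] {u : m → R} {v : n → R} :
    kron u v = 0 ↔ u = 0 ∨ v = 0 := by
  refine ⟨fun h => ?_, ?_⟩
  · by_contra! huv
    obtain ⟨a, ha⟩ := Function.ne_iff.1 huv.1
    obtain ⟨b, hb⟩ := Function.ne_iff.1 huv.2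
    exact mul_ne_zero ha hb (congrFun h (a, b))
  · rintro (rfl | rfl) <;> funext <;> simp [kron]

lemma kronecker_mulVec_kron [CommSemiring R] [Fintype m] [Fintype n]
    (A : Matrix k m R) (B : Matrix l n R) (u : m → R) (v : n → R) :
    (A ⊗ₖ B) *ᵥ kron u v = kron (A *ᵥ u) (B *ᵥ v) := by
  funext i
  simp only [mulVec, dotProduct, kroneckerMap_apply, kron, Fintype.sum_prod_type,
    Finset.sum_mul_sum]
  exact Finset.sum_congr rfl fun _ _ => Finset.sum_congr rfl fun _ _ => by ring

lemma linearIndependent_kron [CommRing R] [Fintype ι] [Fintype κ]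
    {u : ι → m → R} {v : κ → n → R} (hu : LinearIndependent R u) (hv : LinearIndependent R v) :
    LinearIndependent R fun ij : ι × κ => kron (u ij.1) (v ij.2) := by
  rw [Fintype.linearIndependent_iff]
  intro c hc ⟨i, j⟩
  -- At `(a, b)` the relation is one among the `u i`, with coefficients `∑ j, c (i, j) * v j b`.
  have hrow : ∀ i b, ∑ j, c (i, j) * v j b = 0 := fun i b => by
    refine Fintype.linearIndependent_iff.1 hu (fun i => ∑ j, c (i, j) * v j b) ?_ i
    funext a
    have := congrFun hc (a, b)
    simp only [Finset.sum_apply, Pi.smul_apply, smul_eq_mul, kron, Fintype.sum_prod_type,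
      Pi.zero_apply] at this ⊢
    rw [← this]
    simp only [Finset.sum_mul]
    exact Finset.sum_congr rfl fun _ _ => Finset.sum_congr rfl fun _ _ => by ring
  refine Fintype.linearIndependent_iff.1 hv (fun j => c (i, j)) ?_ j
  funext b
  simpa using hrow i b

end Kronecker

lemma notMem_span_range_of_map_eq_zero {R V W ι : Type*} [Semiring R] [AddCommMonoid V]
    [Module R V] [AddCommMonoid W] [Module R W] {Φ : V →ₗ[R] W} {x : V} {v : ι → V}
    (hv : ∀ i, Φ (v i) = 0) (hx : Φ x ≠ 0) : x ∉ Submodule.span R (Set.range v) := fun h =>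
  hx <| LinearMap.mem_ker.1 <| Submodule.span_le.2 (Set.range_subset_iff.2 hv) h

lemma _root_.Matrix.finrank_ker_mulVecLin {m n : Type*} [Fintype n] (A : Matrix m n F) :
    Module.finrank F (LinearMap.ker A.mulVecLin) = Fintype.card n - A.rank := by
  rw [Matrix.rank, ← Module.finrank_fintype_fun_eq_card (R := F),
    ← LinearMap.finrank_range_add_finrank_ker A.mulVecLin, Nat.add_sub_cancel_left]

lemma eval_mulVec {m n : Type*} [Fintype n] (x : F) (L : Matrix m n F[X]) (π : n → F[X]) :
    (fun i => eval x ((L *ᵥ π) i)) = L.map (eval x) *ᵥ fun i => eval x (π i) :=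
  funext fun i => RingHom.map_mulVec (evalRingHom x) L π i

lemma map_eval_mulVec_eq_zero {m n : Type*} [Fintype n] {L : Matrix m n F[X]} {π : n → F[X]}
    (h : L *ᵥ π = 0) (x : F) : L.map (eval x) *ᵥ (fun i => eval x (π i)) = 0 := by
  rw [← eval_mulVec, h]
  funext
  simp

lemma exists_mulVec_eval_ne_zero [Infinite F] {m n : Type*} [Fintype n] {A : Matrix m n F}
    {π : n → F[X]} (h : A.map C *ᵥ π ≠ 0) : ∃ x, A *ᵥ (fun i => eval x (π i)) ≠ 0 := by
  obtain ⟨i, hi⟩ := Function.ne_iff.1 h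
  obtain ⟨x, hx⟩ : ∃ x, eval x ((A.map C *ᵥ π) i) ≠ 0 := by
    by_contra! h0
    exact hi (Polynomial.zero_of_eval_zero _ h0)
  refine ⟨x, Function.ne_iff.2 ⟨i, ?_⟩⟩
  have hA : (A.map C).map (eval x) = A := by ext; simp
  rwa [← hA, ← eval_mulVec]

section ProductPencil

variable {k₁ k₂ e h m n : Type*} [Fintype m] [Fintype n]
  {A : Matrix k₁ m F} {B : Matrix k₂ n F} {L₁ : Matrix e m F} {L₂ : Matrix h n F}

lemma kron_mem_ker_fromRows_kronecker {u : m → F} {v : n → F}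
    (h₁ : A *ᵥ u = 0 ∨ L₂ *ᵥ v = 0) (h₂ : L₁ *ᵥ u = 0 ∨ B *ᵥ v = 0) :
    kron u v ∈ LinearMap.ker (fromRows (A ⊗ₖ L₂) (L₁ ⊗ₖ B)).mulVecLin := by
  rw [LinearMap.mem_ker, mulVecLin_apply, fromRows_mulVec, kronecker_mulVec_kron,
    kronecker_mulVec_kron, kron_eq_zero_iff.2 h₁, kron_eq_zero_iff.2 h₂]
  simp

variable [DecidableEq m] [DecidableEq n]

lemma kron_notMem_span_kron {ι κ : Type*} {u : ι → m → F} {v : κ → n → F}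
    (hu : ∀ i, A *ᵥ u i = 0) (hv : ∀ j, B *ᵥ v j = 0) {p : m → F} {q : n → F}
    (hpq : (A *ᵥ p ≠ 0 ∧ q ≠ 0) ∨ (p ≠ 0 ∧ B *ᵥ q ≠ 0)) :
    kron p q ∉ Submodule.span F (Set.range fun ij : ι × κ => kron (u ij.1) (v ij.2)) := by
  rcases hpq with hpq | hpq
  · refine notMem_span_range_of_map_eq_zero (Φ := (A ⊗ₖ (1 : Matrix n n F)).mulVecLin) ?_ ?_ <;>
      simp [kronecker_mulVec_kron, kron_eq_zero_iff, hu, hpq]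
  · refine notMem_span_range_of_map_eq_zero (Φ := ((1 : Matrix m m F) ⊗ₖ B).mulVecLin) ?_ ?_ <;>
      simp [kronecker_mulVec_kron, kron_eq_zero_iff, hv, hpq]

theorem finrank_ker_mul_finrank_ker_lt_finrank_ker_fromRows_kronecker {p : m → F} {q : n → F}
    (hp : L₁ *ᵥ p = 0) (hq : L₂ *ᵥ q = 0)
    (hpq : (A *ᵥ p ≠ 0 ∧ q ≠ 0) ∨ (p ≠ 0 ∧ B *ᵥ q ≠ 0)) :
    Module.finrank F (LinearMap.ker A.mulVecLin) * Module.finrank F (LinearMap.ker B.mulVecLin) <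
      Module.finrank F (LinearMap.ker (fromRows (A ⊗ₖ L₂) (L₁ ⊗ₖ B)).mulVecLin) := by
  let bA := Module.finBasis F (LinearMap.ker A.mulVecLin)
  let bB := Module.finBasis F (LinearMap.ker B.mulVecLin)
  have hAbA : ∀ i, A *ᵥ bA i = 0 := fun i => (bA i).2
  have hBbB : ∀ j, B *ᵥ bB j = 0 := fun j => (bB j).2
  let w := fun ij : Fin _ × Fin _ => kron (bA ij.1 : m → F) (bB ij.2 : n → F)
  have hli : LinearIndependent F fun o => Option.casesOn' o (kron p q) w :=
    (linearIndependent_kron (bA.linearIndependent.map' _ (Submodule.ker_subtype _))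
      (bB.linearIndependent.map' _ (Submodule.ker_subtype _))).option
      (kron_notMem_span_kron hAbA hBbB hpq)
  have hle : Submodule.span F (Set.range fun o => Option.casesOn' o (kron p q) w) ≤
      LinearMap.ker (fromRows (A ⊗ₖ L₂) (L₁ ⊗ₖ B)).mulVecLin := by
    refine Submodule.span_le.2 (Set.range_subset_iff.2 fun o => ?_)
    cases o with
    | none => exact kron_mem_ker_fromRows_kronecker (.inr hq) (.inl hp)
    | some ij => exact kron_mem_ker_fromRows_kronecker (.inl (hAbA ij.1)) (.inr (hBbB ij.2))
  calc _ < Fintype.card (Option (Fin _ × Fin _)) := by simp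
    _ = _ := (finrank_span_eq_card hli).symm
    _ ≤ _ := Submodule.finrank_mono hle

end ProductPencil

/-- If `A` or `B` in the generalized product construction is not of full block
size, the pencil `M(λ) = [[A ⊗ L_ψ],[L_φ ⊗ B]]` drops rank at some point:
its right kernel has dimension at least `1 + (ε+1-k₁)(η+1-k₂)` somewhere. -/
theorem statement2 [Infinite F] (ε η k₁ k₂ : ℕ)
    (φ : Fin (ε + 1) → Polynomial F) (ψ : Fin (η + 1) → Polynomial F)
    (Lφ : Matrix (Fin ε) (Fin (ε + 1)) (Polynomial F))
    (Lψ : Matrix (Fin η) (Fin (η + 1)) (Polynomial F))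
    (hφ : IsDualBasis Lφ fun i => φ i.rev)
    (hψ : IsDualBasis Lψ fun i => ψ i.rev)
    (hφ0 : ∀ x : F, (fun i : Fin (ε + 1) => Polynomial.eval x (φ i.rev)) ≠ 0)
    (hψ0 : ∀ x : F, (fun i : Fin (η + 1) => Polynomial.eval x (ψ i.rev)) ≠ 0)
    (A : Matrix (Fin k₁) (Fin (ε + 1)) F) (hA : A.rank = k₁)
    (B : Matrix (Fin k₂) (Fin (η + 1)) F) (hB : B.rank = k₂)
    (hAB : (A.map Polynomial.C).mulVec (fun i => φ i.rev) ≠ 0 ∨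
           (B.map Polynomial.C).mulVec (fun i => ψ i.rev) ≠ 0) :
    let M : Matrix ((Fin k₁ × Fin η) ⊕ (Fin ε × Fin k₂))
        (Fin (ε + 1) × Fin (η + 1)) (Polynomial F) :=
      Matrix.of (Sum.elim
        (fun p q => Polynomial.C (A p.1 q.1) * Lψ p.2 q.2)
        (fun p q => Lφ p.1 q.1 * Polynomial.C (B p.2 q.2)))
    ∃ x : F, 1 + (ε + 1 - k₁) * (η + 1 - k₂) ≤
      Module.finrank F (LinearMap.ker ((M.map (Polynomial.eval x)).mulVecLin)) := by
  intro M
  obtain ⟨x, hx⟩ : ∃ x,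
      (A *ᵥ (fun i => eval x (φ i.rev)) ≠ 0 ∧ (fun i : Fin (η + 1) => eval x (ψ i.rev)) ≠ 0) ∨
      ((fun i : Fin (ε + 1) => eval x (φ i.rev)) ≠ 0 ∧ B *ᵥ (fun i => eval x (ψ i.rev)) ≠ 0) := by
    rcases hAB with h | h
    · obtain ⟨x, hx⟩ := exists_mulVec_eval_ne_zero h
      exact ⟨x, .inl ⟨hx, hψ0 x⟩⟩
    · obtain ⟨x, hx⟩ := exists_mulVec_eval_ne_zero h
      exact ⟨x, .inr ⟨hφ0 x, hx⟩⟩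
  have hM : M.map (eval x) = fromRows (A ⊗ₖ Lψ.map (eval x)) (Lφ.map (eval x) ⊗ₖ B) := by
    ext (i | i) j <;> simp [M]
  have hdim := finrank_ker_mul_finrank_ker_lt_finrank_ker_fromRows_kronecker
    (map_eval_mulVec_eq_zero hφ.2.1 x) (map_eval_mulVec_eq_zero hψ.2.1 x) hx
  rw [A.finrank_ker_mulVecLin, B.finrank_ker_mulVecLin, Fintype.card_fin, Fintype.card_fin, hA,
    hB] at hdim
  exact ⟨x, hM ▸ Nat.one_add_le_iff.2 hdim⟩

end PaperLin
end

section
/- Let 𝔽 be a field, k ≥ 2, and let φ_0, φ_1, …, φ_k ∈ 𝔽[λ] satisfy deg φ_i = i for every i (a degree-graded family). Let α, β, γ ∈ 𝔽 with α ≠ 0, and assume the three-term recurrence α·φ_{j+1}(λ) = (λ−β)·φ_j(λ) − γ·φ_{j−1}(λ) holds for all 1 ≤ j ≤ k−1. Define the k×(k+1) matrix pencil L_{k,φ}(λ) whose rows r = 1,…,k−1 have entries α in position (r,r), β−λ in position (r,r+1), γ in position (r,r+2) and zeros elsewhere, and whose last row has φ_0(λ) in position (k,k) and −φ_1(λ)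 in position (k,k+1) and zeros elsewhere. Then L_{k,φ}(λ)·π_{k,φ}(λ) = 0 identically, L_{k,φ}(λ₀) has rank k for every λ₀ ∈ 𝔽, and the k×(k+1) matrix formed by the coefficients of λ in the entries of L_{k,φ}(λ) has rank k. -/
open Polynomial Matrix

/-!
The pencil multiplies π(λ) = (φ_k, …, φ_0) to zero row by row: the first k - 1 rows are the
recurrence read at j = k - 1, …, 1, and the last row is φ_0 φ_1 - φ_1 φ_0. Both rank statements
come from a square upper triangular submatrix with nonzero diagonal. Deleting the last column of
L(λ₀) leaves the diagonal α, …, α, φ_0(λ₀), and φ_0 is a nonzero constant. In the coefficient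
of λ only the entries β - λ and -φ_1 survive, so deleting the first column leaves the diagonal
-1, …, -1, -lc(φ_1).
-/

namespace PaperLin

variable {F : Type*} [Field F]

theorem rank_eq_card_of_isUpperTriangular_submatrix {m n : Type*} [Fintype m]
    [LinearOrder m] [Fintype n] (A : Matrix m n F) (g : m → n)
    (htri : (A.submatrix id g).IsUpperTriangular) (hdiag : ∀ i, A i (g i) ≠ 0) :
    A.rank = Fintype.card m := by
  refine le_antisymm A.rank_le_card_height ?_
  have hdet : IsUnit (A.submatrix id g).det := by
    rw [det_of_isUpperTriangular htri, isUnit_iff_ne_zero]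
    exact Finset.prod_ne_zero_iff.mpr fun i _ => hdiag i
  calc Fintype.card m = (A.submatrix id g).rank :=
        (rank_of_isUnit _ ((isUnit_iff_isUnit_det _).mpr hdet)).symm
    _ ≤ A.rank := rank_submatrix_le A id g

section Pencil

variable {R : Type*}

def recurrencePencil [Zero R] (k : ℕ) (a b c d e : R) : Matrix (Fin k) (Fin (k + 1)) R :=
  Matrix.of fun r col =>
    if (r : ℕ) < k - 1 then
      if (col : ℕ) = (r : ℕ) then a
      else if (col : ℕ) = (r : ℕ) + 1 then b
      else if (col : ℕ) = (r : ℕ) + 2 then c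
      else 0
    else
      if (col : ℕ) = (r : ℕ) then d
      else if (col : ℕ) = (r : ℕ) + 1 then e
      else 0

theorem recurrencePencil_map [Zero R] {S : Type*} [Zero S] (k : ℕ) (a b c d e : R) (f : R → S)
    (hf : f 0 = 0) :
    (recurrencePencil k a b c d e).map f =
      recurrencePencil k (f a) (f b) (f c) (f d) (f e) := by
  ext r col
  simp only [recurrencePencil, map_apply, of_apply, apply_ite f, hf]

theorem sum_fin_ite_val_eq [AddCommMonoid R] {k n : ℕ} (hn : n < k) (x : R) :
    ∑ i : Fin k, (if n = (i : ℕ) then x else 0) = x := by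
  rw [Fin.sum_univ_eq_sum_range (fun i => if n = i then x else 0), Finset.sum_ite_eq,
    if_pos (Finset.mem_range.2 hn)]

theorem mulVec_recurrencePencil [Semiring R] (k : ℕ) (a b c d e : R) (u : ℕ → R) (r : Fin k) :
    (recurrencePencil k a b c d e *ᵥ fun i => u i) r =
      if (r : ℕ) < k - 1 then a * u r + b * u (r + 1) + c * u (r + 2)
      else d * u r + e * u (r + 1) := by
  simp only [mulVec, dotProduct, recurrencePencil, of_apply]
  split_ifs with hr
  · have hterm (i : ℕ) : (if i = r then a else if i = r + 1 then b
        else if i = r + 2 then c else 0) * u i =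
        (if (r : ℕ) = i then a * u r else 0) + (if (r : ℕ) + 1 = i then b * u (r + 1) else 0) +
          (if (r : ℕ) + 2 = i then c * u (r + 2) else 0) := by
      split_ifs <;> first | omega | subst_vars; simp
    simp only [hterm, Finset.sum_add_distrib]
    rw [sum_fin_ite_val_eq (by omega), sum_fin_ite_val_eq (by omega),
      sum_fin_ite_val_eq (by omega)]
  · have hterm (i : ℕ) :
        (if i = r then d else if i = r + 1 then e else 0) * u i =
        (if (r : ℕ) = i then d * u r else 0) + (if (r : ℕ) + 1 = i then e * u (r + 1) else 0) := by
      split_ifs <;> first | omega | subst_vars; simp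
    simp only [hterm, Finset.sum_add_distrib]
    rw [sum_fin_ite_val_eq (by omega), sum_fin_ite_val_eq (by omega)]

end Pencil

theorem rank_recurrencePencil_of_ne_zero (k : ℕ) {a d : F} (b c e : F)
    (ha : a ≠ 0) (hd : d ≠ 0) : (recurrencePencil k a b c d e).rank = k := by
  refine (rank_eq_card_of_isUpperTriangular_submatrix _ Fin.castSucc (fun i j hji => ?_)
    fun i => ?_).trans (Fintype.card_fin k)
  · have hji : (j : ℕ) < i := hji
    simp only [submatrix_apply, id, recurrencePencil, of_apply, Fin.val_castSucc]
    split_ifs <;> first | omega | rfl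
  · by_cases hi : (i : ℕ) < k - 1 <;> simp [recurrencePencil, hi, ha, hd]

theorem rank_recurrencePencil_zero (k : ℕ) {b e : F} (c : F)
    (hb : b ≠ 0) (he : e ≠ 0) : (recurrencePencil k 0 b c 0 e).rank = k := by
  refine (rank_eq_card_of_isUpperTriangular_submatrix _ Fin.succ (fun i j hji => ?_)
    fun i => ?_).trans (Fintype.card_fin k)
  · have hji : (j : ℕ) < i := hji
    simp only [submatrix_apply, id, recurrencePencil, of_apply, Fin.val_succ]
    split_ifs <;> first | omega | rfl
  · by_cases hi : (i : ℕ) < k - 1 <;> simp [recurrencePencil, hi, hb, he]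

/-- The pencil built from a three-term recurrence of a degree-graded family is
a dual minimal basis for that family. -/
theorem statement3 (k : ℕ) (hk : 2 ≤ k) (φ : ℕ → Polynomial F)
    (hdeg : ∀ i ≤ k, (φ i).degree = (i : WithBot ℕ))
    (α β γ : F) (hα : α ≠ 0)
    (hrec : ∀ j, 1 ≤ j → j ≤ k - 1 →
      Polynomial.C α * φ (j + 1) =
        (Polynomial.X - Polynomial.C β) * φ j - Polynomial.C γ * φ (j - 1)) :
    let L : Matrix (Fin k) (Fin (k + 1)) (Polynomial F) :=
      Matrix.of fun r c =>
        if (r : ℕ) < k - 1 then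
          if (c : ℕ) = (r : ℕ) then Polynomial.C α
          else if (c : ℕ) = (r : ℕ) + 1 then Polynomial.C β - Polynomial.X
          else if (c : ℕ) = (r : ℕ) + 2 then Polynomial.C γ
          else 0
        else
          if (c : ℕ) = (r : ℕ) then φ 0
          else if (c : ℕ) = (r : ℕ) + 1 then -(φ 1)
          else 0
    L.mulVec (fun i : Fin (k + 1) => φ (k - (i : ℕ))) = 0 ∧
    (∀ x : F, (L.map (Polynomial.eval x)).rank = k) ∧
    (Matrix.of fun (r : Fin k) (c : Fin (k + 1)) => (L r c).coeff 1).rank = k := by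
  intro L
  have hL : L = recurrencePencil k (C α) (C β - X) (C γ) (φ 0) (-φ 1) := rfl
  have hφ0 : (φ 0).degree = 0 := by simpa using hdeg 0 k.zero_le
  have hφ1 : (φ 1).degree = 1 := by simpa using hdeg 1 (by omega)
  refine ⟨?_, fun x => ?_, ?_⟩
  · funext r
    rw [hL, mulVec_recurrencePencil k _ _ _ _ _ (fun n => φ (k - n)), Pi.zero_apply]
    split_ifs with hr
    · have h := hrec (k - (r + 1)) (by omega) (by omega)
      rw [show k - (r + 1) + 1 = k - r by omega, show k - (r + 1) - 1 = k - (r + 2) by omega] at h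
      linear_combination h
    · rw [show k - r = 1 by omega, show k - (r + 1) = 0 by omega]
      ring
  · rw [hL, recurrencePencil_map _ _ _ _ _ _ _ (eval_zero (x := x))]
    refine rank_recurrencePencil_of_ne_zero k _ _ _ (by simpa using hα) ?_
    rw [eq_C_of_degree_eq_zero hφ0, eval_C]
    exact coeff_ne_zero_of_eq_degree hφ0
  · change (L.map fun p => p.coeff 1).rank = k
    have hφ0_coeff : (φ 0).coeff 1 = 0 :=
      coeff_eq_zero_of_degree_lt (by rw [hφ0]; exact WithBot.coe_lt_coe.2 one_pos)
    rw [hL, recurrencePencil_map _ _ _ _ _ _ _ (coeff_zero 1), hφ0_coeff]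
    simp only [coeff_C_of_ne_zero one_ne_zero, coeff_sub, coeff_X_one, zero_sub, coeff_neg]
    exact rank_recurrencePencil_zero k 0 (neg_ne_zero.2 one_ne_zero)
      (neg_ne_zero.2 (coeff_ne_zero_of_eq_degree hφ1))

end PaperLin
end

section
/- Let 𝔽 be a field and let σ_1, …, σ_{k+1} ∈ 𝔽 be pairwise distinct. Define the Lagrange weights t_i := ∏_{j≠i} (σ_i − σ_j) and the Lagrange polynomials l_i(λ) := (1/t_i)·∏_{j≠i} (λ − σ_j) for i = 1,…,k+1, and let π(λ) := (l_1(λ), …, l_{k+1}(λ))ᵀ. Define the k×(k+1) matrix pencil L(λ) with entries t_r·(λ − σ_r) in position (r,r) and −t_{r+1}·(λ − σ_{r+1}) in position (r,r+1), and zeros elsewhere. Then L(λ)·π(λ) = 0 identically, L(λ₀) has rank k for every λ₀ ∈ 𝔽, and the k×(k+1) matrix formed by the coefficients of λ in the entries of L(λ) has rank k (so L(λ) is a dual minimal basis for the Lagrange basis on the nodes σ_1,…,σ_{k+1}). -/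
/-!
The pencil is the weighted difference matrix with weights `aᵢ = tᵢ (λ - σᵢ)`, whose kernel consists
of the vectors `x` with `aᵢ xᵢ` independent of `i`. Since `tᵢ (λ - σᵢ) lᵢ(λ)` is the nodal polynomial
`∏ⱼ (λ - σⱼ)` for every `i`, `π` lies in the kernel. If at most one weight vanishes, a kernel vector
is determined by one coordinate, so the kernel is at most a line and the rank is `k`; this applies at
every `λ₀` because the nodes are distinct, and to the leading coefficients `tᵢ ≠ 0`.
-/

open Polynomial Matrix

namespace Matrix

variable {R : Type*} [Ring R] {k : ℕ}

def weightedDifference (a : Fin (k + 1) → R) : Matrix (Fin k) (Fin (k + 1)) R :=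
  of fun r c => if c = r.castSucc then a r.castSucc else if c = r.succ then -a r.succ else 0

theorem weightedDifference_mulVec_apply (a x : Fin (k + 1) → R) (r : Fin k) :
    (weightedDifference a *ᵥ x) r = a r.castSucc * x r.castSucc - a r.succ * x r.succ := by
  have hne : r.succ ≠ r.castSucc := (Fin.castSucc_lt_succ (i := r)).ne'
  simp only [mulVec, dotProduct, weightedDifference, of_apply, ite_mul, neg_mul, zero_mul]
  rw [Finset.sum_eq_add (r.castSucc) r.succ hne.symm]
  · simp [hne, sub_eq_add_neg]
  · intro c _ hc
    simp [hc.1, hc.2]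
  · simp
  · simp

theorem weightedDifference_mulVec_eq_zero_iff (a x : Fin (k + 1) → R) :
    weightedDifference a *ᵥ x = 0 ↔ ∀ i, a i * x i = a 0 * x 0 := by
  simp only [funext_iff, weightedDifference_mulVec_apply, Pi.zero_apply, sub_eq_zero]
  refine ⟨fun h i => ?_, fun h r => by rw [h, h r.succ]⟩
  induction i using Fin.induction with
  | zero => rfl
  | succ r ih => rw [← h r, ih]

theorem weightedDifference_map {S G : Type*} [Ring S] [FunLike G R S] [AddMonoidHomClass G R S]
    (f : G) (a : Fin (k + 1) → R) :
    (weightedDifference a).map f = weightedDifference (fun i => f (a i)) := by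
  ext r c
  simp only [weightedDifference, map_apply, of_apply]
  split_ifs <;> simp

theorem rank_weightedDifference {F : Type*} [Field F] {a : Fin (k + 1) → F}
    (ha : {i | a i = 0}.Subsingleton) : (weightedDifference a).rank = k := by
  set M := weightedDifference a
  obtain ⟨c, hc⟩ : ∃ c, ∀ j ≠ c, a j ≠ 0 := by
    by_cases h : ∃ c, a c = 0
    · obtain ⟨c, hc⟩ := h
      exact ⟨c, fun j hj hj0 => hj (ha hj0 hc)⟩
    · exact ⟨0, fun j _ hj0 => h ⟨j, hj0⟩⟩
  -- a kernel vector is determined by its `c`-th coordinate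
  have hinj : Function.Injective
      ((LinearMap.proj c : (Fin (k + 1) → F) →ₗ[F] F) ∘ₗ (LinearMap.ker M.mulVecLin).subtype) := by
    rw [← LinearMap.ker_eq_bot, LinearMap.ker_eq_bot']
    rintro ⟨x, hx⟩ (hxc : x c = 0)
    have hconst := (weightedDifference_mulVec_eq_zero_iff a x).mp hx
    ext j
    obtain rfl | hj := eq_or_ne j c
    · exact hxc
    · have : a j * x j = 0 := by rw [hconst, ← hconst c, hxc, mul_zero]
      exact (mul_eq_zero.mp this).resolve_left (hc j hj)
  have hker : Module.finrank F (LinearMap.ker M.mulVecLin) ≤ 1 := by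
    simpa using LinearMap.finrank_le_finrank_of_injective hinj
  have hrank_nullity := LinearMap.finrank_range_add_finrank_ker M.mulVecLin
  have hle : M.rank ≤ k := by simpa using M.rank_le_card_height
  rw [Module.finrank_fin_fun] at hrank_nullity
  change Module.finrank F (LinearMap.range M.mulVecLin) ≤ k at hle
  change Module.finrank F (LinearMap.range M.mulVecLin) = k
  omega

end Matrix

theorem Lagrange.C_mul_X_sub_C_mul_C_inv_mul_nodal_erase {F ι : Type*} [Field F] [DecidableEq ι]
    {s : Finset ι} {v : ι → F} {i : ι} (hi : i ∈ s) {a : F} (ha : a ≠ 0) :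
    C a * (X - C (v i)) * (C a⁻¹ * Lagrange.nodal (s.erase i) v) = Lagrange.nodal s v :=
  calc C a * (X - C (v i)) * (C a⁻¹ * Lagrange.nodal (s.erase i) v)
      = C (a * a⁻¹) * ((X - C (v i)) * Lagrange.nodal (s.erase i) v) := by rw [C_mul]; ring
    _ = Lagrange.nodal s v := by
      rw [mul_inv_cancel₀ ha, C_1, one_mul, ← Lagrange.nodal_eq_mul_nodal_erase hi]

namespace PaperLin

variable {F : Type*} [Field F]

/-- The explicit bidiagonal pencil is a dual minimal basis for the Lagrange
basis on pairwise distinct nodes `σ_1, …, σ_{k+1}`. -/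
theorem statement4 (k : ℕ) (σ : Fin (k + 1) → F) (hσ : Function.Injective σ) :
    let t : Fin (k + 1) → F := fun i => ∏ j ∈ Finset.univ.erase i, (σ i - σ j)
    let l : Fin (k + 1) → Polynomial F := fun i =>
      Polynomial.C (t i)⁻¹ *
        ∏ j ∈ Finset.univ.erase i, (Polynomial.X - Polynomial.C (σ j))
    let L : Matrix (Fin k) (Fin (k + 1)) (Polynomial F) :=
      Matrix.of fun r c =>
        if c = r.castSucc then
          Polynomial.C (t r.castSucc) * (Polynomial.X - Polynomial.C (σ r.castSucc))
        else if c = r.succ then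
          -(Polynomial.C (t r.succ) * (Polynomial.X - Polynomial.C (σ r.succ)))
        else 0
    L.mulVec l = 0 ∧
    (∀ x : F, (L.map (Polynomial.eval x)).rank = k) ∧
    (Matrix.of fun (r : Fin k) (c : Fin (k + 1)) => (L r c).coeff 1).rank = k := by
  intro t l L
  have ht : ∀ i, t i ≠ 0 := fun i =>
    Finset.prod_ne_zero_iff.mpr fun j hj =>
      sub_ne_zero.mpr (hσ.ne (Finset.ne_of_mem_erase hj).symm)
  have hL : L = weightedDifference fun i => C (t i) * (X - C (σ i)) := rfl
  have hnodal : ∀ i, C (t i) * (X - C (σ i)) * l i = Lagrange.nodal Finset.univ σ := fun i =>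
    Lagrange.C_mul_X_sub_C_mul_C_inv_mul_nodal_erase (Finset.mem_univ i) (ht i)
  refine ⟨?_, fun x => ?_, ?_⟩
  · rw [hL, weightedDifference_mulVec_eq_zero_iff]
    intro i
    rw [hnodal, hnodal]
  · rw [hL, ← coe_evalRingHom, weightedDifference_map]
    apply rank_weightedDifference
    intro i hi j hj
    simp only [Set.mem_ofPred_eq, coe_evalRingHom, eval_mul, eval_C, eval_sub, eval_X,
      mul_eq_zero, ht, false_or, sub_eq_zero] at hi hj
    exact hσ (hi.symm.trans hj)
  · change (L.map (lcoeff F 1)).rank = k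
    rw [hL, weightedDifference_map]
    apply rank_weightedDifference
    simp [mul_sub, coeff_C, ht]

end PaperLin
end

section
/- Let 𝔽 be a field and σ_1, …, σ_k ∈ 𝔽. Define the Newton polynomials n_0(λ) := 1 and n_j(λ) := ∏_{i=1}^{j} (λ − σ_i) for j = 1,…,k, and let π(λ) := (n_k(λ), n_{k−1}(λ), …, n_0(λ))ᵀ. Define the k×(k+1) matrix pencil L(λ) with entries 1 in position (r,r) and σ_{k+1−r} − λ in position (r,r+1), and zeros elsewhere. Then L(λ)·π(λ) = 0 identically, L(λ₀) has rank k for every λ₀ ∈ 𝔽, and the k×(k+1) matrix formed by the coefficients of λ in the entries of L(λ) has rank k (so L(λ) is a dual minimal basis for the Newton basis on the nodes σ_1,…,σ_k). -/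
/-!
Row `r` of `L(λ) π(λ)` reads `n_{j+1}(λ) + (σ_{j+1} - λ) n_j(λ)` with `j = k - 1 - r`, which vanishes
by the recursion `n_{j+1} = (λ - σ_{j+1}) n_j`. Both `L(λ₀)` and its `λ`-coefficient are bidiagonal:
deleting the last column of `L(λ₀)` leaves an upper unitriangular matrix, and deleting the first
column of the coefficient matrix leaves `-1`, so each has a `k × k` minor that is a unit.
-/

open Polynomial Matrix

namespace PaperLin

theorem rank_eq_card_of_isUnit_det_submatrix {R m n : Type*} [CommRing R] [StrongRankCondition R]
    [Fintype m] [DecidableEq m] [Fintype n] (A : Matrix m n R) (g : m → n)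
    (h : IsUnit (A.submatrix id g).det) : A.rank = Fintype.card m :=
  le_antisymm A.rank_le_card_height <|
    calc Fintype.card m = (A.submatrix id g).rank :=
          (rank_of_isUnit _ ((isUnit_iff_isUnit_det _).mpr h)).symm
      _ ≤ A.rank := rank_submatrix_le A id g

section Bidiagonal

variable {R : Type*} {k : ℕ}

def bidiagonal [Zero R] (a b : Fin k → R) : Matrix (Fin k) (Fin (k + 1)) R :=
  of fun r c => if c = r.castSucc then a r else if c = r.succ then b r else 0

theorem bidiagonal_map [Zero R] {S : Type*} [Zero S] (a b : Fin k → R) (f : R → S)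
    (hf : f 0 = 0) : (bidiagonal a b).map f = bidiagonal (f ∘ a) (f ∘ b) := by
  ext r c
  simp only [bidiagonal, map_apply, of_apply, Function.comp_apply]
  split_ifs <;> simp [hf]

theorem mulVec_bidiagonal [NonUnitalNonAssocSemiring R] (a b : Fin k → R) (v : Fin (k + 1) → R) :
    bidiagonal a b *ᵥ v = fun r => a r * v r.castSucc + b r * v r.succ := by
  ext r
  have hne : r.succ ≠ r.castSucc := Fin.castSucc_lt_succ.ne'
  simp only [mulVec, dotProduct, bidiagonal, of_apply, ite_mul, zero_mul]
  rw [Finset.sum_ite, Finset.sum_ite]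
  simp [Finset.filter_eq', Finset.filter_ne', hne]

theorem det_bidiagonal_submatrix_castSucc [CommRing R] (a b : Fin k → R) :
    ((bidiagonal a b).submatrix id Fin.castSucc).det = ∏ r, a r := by
  rw [det_of_isUpperTriangular]
  · simp [bidiagonal]
  · intro i j (hji : j < i)
    have h₁ : j.castSucc ≠ i.castSucc := by simpa using hji.ne
    have h₂ : j.castSucc ≠ i.succ := by
      rw [Ne, Fin.ext_iff, Fin.val_castSucc, Fin.val_succ]; lia
    simp [bidiagonal, h₁, h₂]

theorem det_bidiagonal_submatrix_succ [CommRing R] (a b : Fin k → R) :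
    ((bidiagonal a b).submatrix id Fin.succ).det = ∏ r, b r := by
  rw [det_of_isLowerTriangular]
  · simp [bidiagonal, Fin.castSucc_lt_succ.ne']
  · intro i j (hij : i < j)
    have h₁ : j.succ ≠ i.castSucc := by
      rw [Ne, Fin.ext_iff, Fin.val_castSucc, Fin.val_succ]; lia
    have h₂ : j.succ ≠ i.succ := by simpa using hij.ne'
    simp [bidiagonal, h₁, h₂]

variable [CommRing R] [StrongRankCondition R]

theorem rank_bidiagonal_of_isUnit_left {a : Fin k → R} (b : Fin k → R)
    (ha : ∀ r, IsUnit (a r)) : (bidiagonal a b).rank = k := by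
  simpa using rank_eq_card_of_isUnit_det_submatrix _ Fin.castSucc
    (by rwa [det_bidiagonal_submatrix_castSucc, IsUnit.prod_univ_iff])

theorem rank_bidiagonal_of_isUnit_right (a : Fin k → R) {b : Fin k → R}
    (hb : ∀ r, IsUnit (b r)) : (bidiagonal a b).rank = k := by
  simpa using rank_eq_card_of_isUnit_det_submatrix _ Fin.succ
    (by rwa [det_bidiagonal_submatrix_succ, IsUnit.prod_univ_iff])

end Bidiagonal

theorem prod_filter_val_lt_succ {M : Type*} [CommMonoid M] {k : ℕ} (f : Fin k → M) (j : Fin k) :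
    ∏ i ∈ Finset.univ.filter (fun i : Fin k => (i : ℕ) < j + 1), f i
      = (∏ i ∈ Finset.univ.filter (fun i : Fin k => (i : ℕ) < j), f i) * f j := by
  have : Finset.univ.filter (fun i : Fin k => (i : ℕ) < j + 1)
      = insert j (Finset.univ.filter fun i : Fin k => (i : ℕ) < j) := by
    ext i
    simp only [Finset.mem_filter, Finset.mem_univ, true_and, Finset.mem_insert, Fin.ext_iff]
    lia
  rw [this, Finset.prod_insert (by simp), mul_comm]

variable {F : Type*} [Field F]

/-- The explicit bidiagonal pencil is a dual minimal basis for the Newton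
basis on the nodes `σ_1, …, σ_k`. -/
theorem statement5 (k : ℕ) (σ : Fin k → F) :
    let n : Fin (k + 1) → Polynomial F := fun j =>
      ∏ i ∈ Finset.univ.filter (fun i : Fin k => (i : ℕ) < (j : ℕ)),
        (Polynomial.X - Polynomial.C (σ i))
    let π : Fin (k + 1) → Polynomial F := fun i => n i.rev
    let L : Matrix (Fin k) (Fin (k + 1)) (Polynomial F) :=
      Matrix.of fun r c =>
        if c = r.castSucc then 1
        else if c = r.succ then Polynomial.C (σ r.rev) - Polynomial.X
        else 0
    L.mulVec π = 0 ∧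
    (∀ x : F, (L.map (Polynomial.eval x)).rank = k) ∧
    (Matrix.of fun (r : Fin k) (c : Fin (k + 1)) => (L r c).coeff 1).rank = k := by
  intro n π L
  have hL : L = bidiagonal 1 fun r => C (σ r.rev) - X := rfl
  have newton_succ (j : Fin k) : n j.succ = n j.castSucc * (X - C (σ j)) :=
    prod_filter_val_lt_succ _ j
  refine ⟨?_, fun x => ?_, ?_⟩
  · ext1 r
    rw [hL, mulVec_bidiagonal]
    simp only [π, Fin.rev_castSucc, Fin.rev_succ, newton_succ, Pi.one_apply, Pi.zero_apply]
    ring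
  · rw [hL, bidiagonal_map _ _ _ eval_zero]
    exact rank_bidiagonal_of_isUnit_left _ fun _ => by simp
  · change (L.map (coeff · 1)).rank = k
    rw [hL, bidiagonal_map _ _ _ (coeff_zero 1)]
    exact rank_bidiagonal_of_isUnit_right _ fun _ => by simp [coeff_X]

end PaperLin
end

section
/- Let 𝔽 be a field, σ_1, …, σ_n ∈ 𝔽 pairwise distinct, s_1, …, s_n ≥ 1 integers, k := s_1 + … + s_n, and ω(λ) := ∏_{j=1}^{n} (λ − σ_j)^{s_j}. Let π(λ) ∈ 𝔽[λ]^{k} be the stacked vector whose j-th block (of length s_j) is (ω(λ)/(λ−σ_j)^{s_j}, ω(λ)/(λ−σ_j)^{s_j−1}, …, ω(λ)/(λ−σ_j))ᵀ, where each entry ω(λ)/(λ−σ_j)^{i} denotes the polynomial (λ−σ_j)^{s_j−i}·∏_{l≠j}(λ−σ_l)^{s_l}. Define the (k−1)×k block-bidiagonal matrix pencil L(λ) whose j-th diagonal block, for j = 1,…,n−1, is the s_j×s_j matrix J_{σ_j}(λ) with λ−σ_j on the diagonal and −1 on the superdiagonal, whose last diagonal block is the (s_n−1)×s_n matrix with λ−σ_n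 on the diagonal and −1 on the superdiagonal, and whose block in block-position (j, j+1), for j = 1,…,n−1, is −(λ−σ_{j+1})·e_{s_j}·e_{s_{j+1}}ᵀ (where e_s denotes the last standard basis vector of 𝔽^{s_j} and the last standard basis vector of 𝔽^{s_{j+1}} respectively), all other blocks being zero. Then L(λ)·π(λ) = 0 identically and L(λ₀) has rank k−1 for every λ₀ ∈ 𝔽 (so L(λ) is a dual basis for the Hermite basis with nodes σ_j of orders s_j). -/
/-!
Write `a j = λ - σ j`. Row `(j, i)` of the pencil says `a j * v (j, i) = v (j, i + 1)` inside the
`j`-th block, and `a j * v (j, s j - 1) = a (j + 1) * v (j + 1, s (j + 1) - 1)` across consecutive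
blocks. Hence a kernel vector has the form `v (j, i) = a j ^ i * V j` with `a j ^ s j * V j`
independent of `j`; the Hermite vector is of this form, with common value `∏ l, a l ^ s l`.
At `λ = x` at most one `a j₀` vanishes, since the nodes are distinct, so a kernel vector is
determined by `V j₀`: the kernel is a line and rank–nullity gives rank `k - 1`.
-/

open Polynomial Matrix

theorem Fin.apply_eq_apply_of_apply_succ_eq {α : Type*} {n : ℕ} {f : Fin n → α}
    (h : ∀ (j : Fin n) (hj : (j : ℕ) + 1 < n), f ⟨j + 1, hj⟩ = f j) (i j : Fin n) :
    f i = f j := by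
  have to_zero : ∀ (m : ℕ) (hm : m < n), f ⟨m, hm⟩ = f ⟨0, by omega⟩ := by
    intro m
    induction m with
    | zero => exact fun _ => rfl
    | succ m ih => exact fun hm => (h ⟨m, by omega⟩ hm).trans (ih _)
  exact (to_zero i i.isLt).trans (to_zero j j.isLt).symm

theorem exists_forall_ne_sub_ne_zero {ι G : Type*} [Nonempty ι] [AddGroup G] {σ : ι → G}
    (hσ : Function.Injective σ) (x : G) : ∃ j₀, ∀ l ≠ j₀, x - σ l ≠ 0 := by
  by_cases hx : ∃ j, σ j = x
  · obtain ⟨j₀, rfl⟩ := hx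
    exact ⟨j₀, fun l hl h => hl (hσ (sub_eq_zero.mp h).symm)⟩
  · push Not at hx
    exact ⟨Classical.arbitrary ι, fun l _ h => hx l (sub_eq_zero.mp h).symm⟩

namespace PaperLin

section Pencil

variable {R : Type*} [CommRing R] {n : ℕ} {s t : Fin n → ℕ}

def bidiagPencil (s t : Fin n → ℕ) (a : Fin n → R) :
    Matrix (Σ j : Fin n, Fin (t j)) (Σ j : Fin n, Fin (s j)) R :=
  of fun p q =>
    if p.1 = q.1 ∧ (p.2 : ℕ) = (q.2 : ℕ) then a p.1
    else if p.1 = q.1 ∧ (q.2 : ℕ) = (p.2 : ℕ) + 1 then -1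
    else if (q.1 : ℕ) = (p.1 : ℕ) + 1 ∧ (p.2 : ℕ) = s p.1 - 1 ∧ (q.2 : ℕ) = s q.1 - 1 then
      -(a q.1)
    else 0

theorem bidiagPencil_map {S : Type*} [CommRing S] (f : R →+* S) (a : Fin n → R) :
    (bidiagPencil s t a).map f = bidiagPencil s t (f ∘ a) := by
  ext p q
  simp only [bidiagPencil, map_apply, of_apply, Function.comp_apply]
  split_ifs <;> simp

theorem bidiagPencil_mulVec_apply_of_lt (a : Fin n → R) (v : (Σ j : Fin n, Fin (s j)) → R)
    (p : Σ j : Fin n, Fin (t j)) (h : (p.2 : ℕ) + 1 < s p.1) :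
    (bidiagPencil s t a *ᵥ v) p = a p.1 * v ⟨p.1, ⟨p.2, by omega⟩⟩ - v ⟨p.1, ⟨p.2 + 1, h⟩⟩ := by
  rw [mulVec, dotProduct, Fintype.sum_eq_add ⟨p.1, ⟨p.2, by omega⟩⟩ ⟨p.1, ⟨p.2 + 1, h⟩⟩]
  · simp [bidiagPencil, sub_eq_add_neg]
  · simp
  · rintro ⟨j, i⟩ ⟨h1, h2⟩
    simp only [bidiagPencil, of_apply]
    split_ifs with c1 c2 c3
    · obtain ⟨rfl, c⟩ := c1; simp [c] at h1
    · obtain ⟨rfl, c⟩ := c2; simp [Fin.ext_iff, c] at h2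
    · omega
    · simp

theorem bidiagPencil_mulVec_apply_of_succ_eq (a : Fin n → R) (v : (Σ j : Fin n, Fin (s j)) → R)
    (p : Σ j : Fin n, Fin (t j)) (h : (p.2 : ℕ) + 1 = s p.1) (q : Σ j : Fin n, Fin (s j))
    (hq₁ : (q.1 : ℕ) = p.1 + 1) (hq₂ : (q.2 : ℕ) = s q.1 - 1) :
    (bidiagPencil s t a *ᵥ v) p = a p.1 * v ⟨p.1, ⟨p.2, by omega⟩⟩ - a q.1 * v q := by
  obtain ⟨k, m⟩ := p
  obtain ⟨j', i'⟩ := q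
  dsimp only at h hq₁ hq₂ ⊢
  have hne : k ≠ j' := fun hk => by simp [hk] at hq₁
  have hlast : (m : ℕ) = s k - 1 := by omega
  rw [mulVec, dotProduct, Fintype.sum_eq_add ⟨k, ⟨m, by omega⟩⟩ ⟨j', i'⟩]
  · simp [bidiagPencil, hne, hq₁, hq₂, hlast, sub_eq_add_neg]
  · simp [hne]
  · rintro ⟨j, i⟩ ⟨h1, h2⟩
    simp only [bidiagPencil, of_apply]
    split_ifs with c1 c2 c3
    · obtain ⟨rfl, c⟩ := c1; simp [c] at h1
    · obtain ⟨rfl, c⟩ := c2; have := i.isLt; omega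
    · obtain ⟨c, -, c'⟩ := c3
      obtain rfl : j = j' := Fin.ext (by omega)
      simp [Fin.ext_iff] at h2
      omega
    · simp

def truncLast (s : Fin n → ℕ) : Fin n → ℕ := fun j => if (j : ℕ) = n - 1 then s j - 1 else s j

theorem lt_truncLast_iff (j : Fin n) (i : ℕ) :
    i < truncLast s j ↔ i + 1 < s j ∨ (i + 1 = s j ∧ (j : ℕ) + 1 < n) := by
  have := j.isLt
  unfold truncLast
  split_ifs <;> omega

def hermiteVector (s : Fin n → ℕ) (a : Fin n → R) : (Σ j : Fin n, Fin (s j)) → R :=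
  fun q => a q.1 ^ (q.2 : ℕ) * ∏ l ∈ Finset.univ.erase q.1, a l ^ s l

theorem mul_hermiteVector_of_succ_eq (a : Fin n → R) (j : Fin n) (i : Fin (s j))
    (hi : (i : ℕ) + 1 = s j) : a j * hermiteVector s a ⟨j, i⟩ = ∏ l, a l ^ s l := by
  simp only [hermiteVector]
  rw [← mul_assoc, ← pow_succ', hi,
    Finset.mul_prod_erase _ (fun l => a l ^ s l) (Finset.mem_univ j)]

theorem bidiagPencil_mulVec_hermiteVector (hs : ∀ j, 1 ≤ s j) (a : Fin n → R) :
    bidiagPencil s (truncLast s) a *ᵥ hermiteVector s a = 0 := by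
  funext p
  rcases (lt_truncLast_iff p.1 p.2).mp p.2.isLt with hp | ⟨hp, hn⟩
  · rw [bidiagPencil_mulVec_apply_of_lt a _ p hp]
    simp only [hermiteVector, pow_succ', Pi.zero_apply]
    ring
  · obtain ⟨j', hj'⟩ : ∃ j' : Fin n, (j' : ℕ) = p.1 + 1 := ⟨⟨_, hn⟩, rfl⟩
    have := hs j'
    rw [bidiagPencil_mulVec_apply_of_succ_eq a _ p hp ⟨j', ⟨s j' - 1, by omega⟩⟩ hj' rfl,
      mul_hermiteVector_of_succ_eq _ _ _ hp,
      mul_hermiteVector_of_succ_eq a j' _ (by dsimp only; omega), sub_self, Pi.zero_apply]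

section Kernel

variable {a : Fin n → R} {v : (Σ j : Fin n, Fin (s j)) → R}

theorem apply_eq_pow_mul_of_mulVec_eq_zero (hv : bidiagPencil s (truncLast s) a *ᵥ v = 0)
    (j : Fin n) (i : ℕ) (hi : i < s j) :
    v ⟨j, ⟨i, hi⟩⟩ = a j ^ i * v ⟨j, ⟨0, by omega⟩⟩ := by
  induction i with
  | zero => simp
  | succ i ih =>
    have hrow := congrFun hv ⟨j, ⟨i, (lt_truncLast_iff j i).mpr (.inl hi)⟩⟩
    rw [bidiagPencil_mulVec_apply_of_lt a v _ hi, Pi.zero_apply, sub_eq_zero] at hrow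
    rw [← hrow, ih, pow_succ', mul_assoc]

theorem pow_mul_eq_of_mulVec_eq_zero (hs : ∀ j, 1 ≤ s j)
    (hv : bidiagPencil s (truncLast s) a *ᵥ v = 0) (j j' : Fin n) :
    a j ^ s j * v ⟨j, ⟨0, hs j⟩⟩ = a j' ^ s j' * v ⟨j', ⟨0, hs j'⟩⟩ := by
  refine Fin.apply_eq_apply_of_apply_succ_eq (f := fun j => a j ^ s j * v ⟨j, ⟨0, hs j⟩⟩)
    (fun j₁ hj₁ => ?_) j j'
  set j₂ : Fin n := ⟨j₁ + 1, hj₁⟩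
  have := hs j₁
  have := hs j₂
  have hrow := congrFun hv ⟨j₁, ⟨s j₁ - 1, (lt_truncLast_iff j₁ _).mpr (.inr ⟨by omega, hj₁⟩)⟩⟩
  rw [bidiagPencil_mulVec_apply_of_succ_eq a v _ (by dsimp only; omega)
      ⟨j₂, ⟨s j₂ - 1, by omega⟩⟩ rfl rfl, Pi.zero_apply, sub_eq_zero] at hrow
  dsimp only at hrow
  rw [apply_eq_pow_mul_of_mulVec_eq_zero hv j₁, apply_eq_pow_mul_of_mulVec_eq_zero hv j₂,
    ← mul_assoc, ← mul_assoc, mul_pow_sub_one (by omega), mul_pow_sub_one (by omega)] at hrow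
  exact hrow.symm

theorem eq_zero_of_mulVec_eq_zero [NoZeroDivisors R] (hs : ∀ j, 1 ≤ s j) {j₀ : Fin n}
    (ha : ∀ l ≠ j₀, a l ≠ 0) (hv : bidiagPencil s (truncLast s) a *ᵥ v = 0)
    (h₀ : v ⟨j₀, ⟨0, hs j₀⟩⟩ = 0) : v = 0 := by
  have hV : ∀ j, v ⟨j, ⟨0, hs j⟩⟩ = 0 := by
    intro j
    rcases eq_or_ne j j₀ with rfl | hj
    · exact h₀
    · have := pow_mul_eq_of_mulVec_eq_zero hs hv j j₀
      rw [h₀, mul_zero, mul_eq_zero] at this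
      exact this.resolve_left (pow_ne_zero _ (ha j hj))
  funext ⟨j, i⟩
  rw [Pi.zero_apply, ← Fin.eta i i.isLt, apply_eq_pow_mul_of_mulVec_eq_zero hv, hV, mul_zero]

end Kernel

end Pencil

section Rank

variable {F : Type*} [Field F] {n : ℕ} {s : Fin n → ℕ}

theorem finrank_ker_bidiagPencil (hs : ∀ j, 1 ≤ s j) {a : Fin n → F} {j₀ : Fin n}
    (ha : ∀ l ≠ j₀, a l ≠ 0) :
    Module.finrank F (LinearMap.ker (bidiagPencil s (truncLast s) a).mulVecLin) = 1 := by
  set K := LinearMap.ker (bidiagPencil s (truncLast s) a).mulVecLin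
  apply le_antisymm
  · let φ : K →ₗ[F] F := (LinearMap.proj ⟨j₀, ⟨0, hs j₀⟩⟩).comp K.subtype
    have hφ : Function.Injective φ := by
      refine (injective_iff_map_eq_zero φ).mpr fun ⟨v, hv⟩ h₀ => ?_
      exact Subtype.ext (eq_zero_of_mulVec_eq_zero hs ha hv h₀)
    simpa using LinearMap.finrank_le_finrank_of_injective hφ
  · refine Module.finrank_pos_iff_exists_ne_zero.mpr
      ⟨⟨hermiteVector s a, bidiagPencil_mulVec_hermiteVector hs a⟩, fun h => ?_⟩
    have h₀ := congrFun (congrArg Subtype.val h) ⟨j₀, ⟨0, hs j₀⟩⟩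
    simp only [hermiteVector, pow_zero, one_mul, ZeroMemClass.coe_zero, Pi.zero_apply] at h₀
    exact Finset.prod_ne_zero_iff.mpr
      (fun l hl => pow_ne_zero _ (ha l (Finset.ne_of_mem_erase hl))) h₀

theorem rank_bidiagPencil (hs : ∀ j, 1 ≤ s j) {a : Fin n → F} {j₀ : Fin n}
    (ha : ∀ l ≠ j₀, a l ≠ 0) : (bidiagPencil s (truncLast s) a).rank = (∑ j, s j) - 1 := by
  have h := LinearMap.finrank_range_add_finrank_ker (bidiagPencil s (truncLast s) a).mulVecLin
  rw [finrank_ker_bidiagPencil hs ha, Module.finrank_fintype_fun_eq_card, Fintype.card_sigma] at h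
  simp only [Fintype.card_fin] at h
  rw [Matrix.rank]
  omega

end Rank

variable {F : Type*} [Field F]

/-- The explicit block-bidiagonal pencil is a dual basis for the Hermite basis
with nodes `σ_j` of orders `s_j`. -/
theorem statement6 (n : ℕ) (hn : 1 ≤ n) (σ : Fin n → F)
    (hσ : Function.Injective σ) (s : Fin n → ℕ) (hs : ∀ j, 1 ≤ s j) :
    let k : ℕ := ∑ j, s j
    let π : (Σ j : Fin n, Fin (s j)) → Polynomial F := fun p =>
      (Polynomial.X - Polynomial.C (σ p.1)) ^ (p.2 : ℕ) *
        ∏ l ∈ Finset.univ.erase p.1, (Polynomial.X - Polynomial.C (σ l)) ^ (s l)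
    let t : Fin n → ℕ := fun j => if (j : ℕ) = n - 1 then s j - 1 else s j
    let L : Matrix (Σ j : Fin n, Fin (t j)) (Σ j : Fin n, Fin (s j)) (Polynomial F) :=
      Matrix.of fun p q =>
        if p.1 = q.1 ∧ (p.2 : ℕ) = (q.2 : ℕ) then
          Polynomial.X - Polynomial.C (σ p.1)
        else if p.1 = q.1 ∧ (q.2 : ℕ) = (p.2 : ℕ) + 1 then -1
        else if (q.1 : ℕ) = (p.1 : ℕ) + 1 ∧ (p.2 : ℕ) = s p.1 - 1 ∧
            (q.2 : ℕ) = s q.1 - 1 then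
          -(Polynomial.X - Polynomial.C (σ q.1))
        else 0
    L.mulVec π = 0 ∧
    ∀ x : F, (L.map (Polynomial.eval x)).rank = k - 1 := by
  intro k π t L
  refine ⟨bidiagPencil_mulVec_hermiteVector hs (fun j => X - C (σ j)), fun x => ?_⟩
  have : Nonempty (Fin n) := Fin.pos_iff_nonempty.mp hn
  obtain ⟨j₀, hj₀⟩ := exists_forall_ne_sub_ne_zero hσ x
  have hLx : L.map (eval x) = bidiagPencil s (truncLast s) (fun j => x - σ j) := by
    rw [show (fun j => x - σ j) = evalRingHom x ∘ fun j => X - C (σ j) by funext j; simp]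
    exact bidiagPencil_map (evalRingHom x) (fun j => X - C (σ j))
  rw [hLx]
  exact rank_bidiagPencil hs hj₀

end PaperLin
end

section
/- Let 𝔽 be a field and ε, η ≥ 1. For each k, let L_k(λ) denote the k×(k+1) matrix pencil with entry 1 in position (r,r) and −λ in position (r,r+1) and zeros elsewhere (the dual basis of the monomial vector π_k(λ) = (λ^k, …, λ, 1)ᵀ). Let p, q ∈ 𝔽^{ε+1} and r, s ∈ 𝔽^{η+1} be coefficient vectors, and set p(λ) := pᵀ·π_ε(λ), q(λ) := qᵀ·π_ε(λ), r(λ) := rᵀ·π_η(λ), s(λ) := sᵀ·π_η(λ). Then the square matrix pencil ℒ(λ) := [[p·sᵀ + q·rᵀ, L_ε(λ)ᵀ],[L_η(λ), 0]] of size ε+η+1 is a linearization for the scalar polynomial t(λ) := p(λ)·s(λ) + r(λ)·q(λ) (whose zeros are the zeros of the rational function p(λ)/q(λ) + r(λ)/s(λ) when numerators and denominators share no common factors). -/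
/-!
Let `V_k` be the upper unitriangular matrix with entries `λ^(j-i)` above the diagonal; its last
column is `π_k`, and `L_k V_k = [I_k 0]`. For any block `A`, multiplying `[[A, L_εᵀ], [L_η, 0]]`
by `diag(V_εᵀ, I)` on the left and by `diag(V_η, I)` on the right gives
`[[V_εᵀ A V_η, [I 0]ᵀ], [[I 0], 0]]`, and the identity blocks then clear every entry of
`V_εᵀ A V_η` except the corner `π_εᵀ A π_η`. What remains is a permutation of
`diag(I, π_εᵀ A π_η)`, and for `A = p sᵀ + q rᵀ` the corner is `p(λ)s(λ) + q(λ)r(λ)`.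
-/

open Polynomial Matrix

namespace PaperLin

variable {F : Type*} [Field F]

/-- A square matrix polynomial is *unimodular* if its determinant is a
nonzero constant of the field. -/
def Unimodular {ι : Type*} [Fintype ι] [DecidableEq ι]
    (E : Matrix ι ι (Polynomial F)) : Prop :=
  ∃ c : F, c ≠ 0 ∧ E.det = Polynomial.C c

/-- `L` is a linearization of `P`: `L` is extended unimodularly equivalent to
`P`, i.e. `E(λ) ⬝ diag(I_r, L(λ)) ⬝ G(λ) = diag(I_s, P(λ))` for some unimodular
`E`, `G` (up to bijections of the index sets). -/
def IsLinearization {ι₁ ι₂ κ : Type*} [Fintype ι₁] [DecidableEq ι₁]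
    [Fintype ι₂] [DecidableEq ι₂] [Fintype κ] [DecidableEq κ]
    (L : Matrix ι₁ ι₂ (Polynomial F)) (P : Matrix κ κ (Polynomial F)) : Prop :=
  ∃ (r s : ℕ)
    (E : Matrix (Fin r ⊕ ι₁) (Fin r ⊕ ι₁) (Polynomial F))
    (G : Matrix (Fin r ⊕ ι₂) (Fin r ⊕ ι₂) (Polynomial F))
    (e₁ : (Fin r ⊕ ι₁) ≃ (Fin s ⊕ κ)) (e₂ : (Fin r ⊕ ι₂) ≃ (Fin s ⊕ κ)),
    Unimodular E ∧ Unimodular G ∧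
    E * (Matrix.fromBlocks 1 0 0 L : Matrix (Fin r ⊕ ι₁) (Fin r ⊕ ι₂) (Polynomial F)) * G =
      Matrix.reindex e₁.symm e₂.symm (Matrix.fromBlocks 1 0 0 P)

section Pencil

variable {R : Type*} [CommRing R]

variable (R) in
def initProj (k : ℕ) : Matrix (Fin k) (Fin (k + 1)) R :=
  (1 : Matrix (Fin (k + 1)) (Fin (k + 1)) R).submatrix Fin.castSucc id

variable (R) in
def tailProj (k : ℕ) : Matrix (Fin k) (Fin (k + 1)) R :=
  (1 : Matrix (Fin (k + 1)) (Fin (k + 1)) R).submatrix Fin.succ id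

variable (R) in
noncomputable def dualPencil (k : ℕ) : Matrix (Fin k) (Fin (k + 1)) R[X] :=
  of fun i c => if c = i.castSucc then 1 else if c = i.succ then -X else 0

variable (R) in
noncomputable def monomialMatrix (k : ℕ) : Matrix (Fin (k + 1)) (Fin (k + 1)) R[X] :=
  of fun i j => if i ≤ j then X ^ ((j : ℕ) - i) else 0

variable (R) in
noncomputable def monomialVec (k : ℕ) : Fin (k + 1) → R[X] := fun i => X ^ (k - (i : ℕ))

theorem initProj_mul {k : ℕ} {ι : Type*} (M : Matrix (Fin (k + 1)) ι R) :
    initProj R k * M = M.submatrix Fin.castSucc id := by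
  simpa [initProj] using one_submatrix_mul Fin.castSucc (Equiv.refl _) M

theorem tailProj_mul {k : ℕ} {ι : Type*} (M : Matrix (Fin (k + 1)) ι R) :
    tailProj R k * M = M.submatrix Fin.succ id := by
  simpa [tailProj] using one_submatrix_mul Fin.succ (Equiv.refl _) M

theorem one_sub_initProj_transpose_mul_initProj (k : ℕ) :
    1 - (initProj R k)ᵀ * initProj R k = single (Fin.last k) (Fin.last k) (1 : R) := by
  have last_ne (i : Fin k) : Fin.last k ≠ i.castSucc := (Fin.castSucc_ne_last i).symm
  ext a b
  induction a using Fin.lastCases <;> induction b using Fin.lastCases <;>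
    simp [initProj, mul_apply, one_apply, last_ne]

theorem sub_mul_initProj_sub_initProj_mul_eq_single {m n : ℕ}
    (M : Matrix (Fin (m + 1)) (Fin (n + 1)) R) :
    M - M * (initProj R n)ᵀ * initProj R n
        - (initProj R m)ᵀ * (initProj R m * (M * single (Fin.last n) (Fin.last n) (1 : R))) =
      single (Fin.last m) (Fin.last n) (M (Fin.last m) (Fin.last n)) := by
  have h : single (Fin.last m) (Fin.last n) (M (Fin.last m) (Fin.last n)) =
      (1 - (initProj R m)ᵀ * initProj R m) * M * (1 - (initProj R n)ᵀ * initProj R n) := by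
    simp only [one_sub_initProj_transpose_mul_initProj, single_mul_mul_single, one_mul, mul_one]
  rw [h, ← one_sub_initProj_transpose_mul_initProj n]
  simp only [Matrix.mul_sub, Matrix.sub_mul, Matrix.mul_one, Matrix.one_mul, Matrix.mul_assoc]
  abel

theorem dualPencil_eq_initProj_sub (k : ℕ) :
    dualPencil R k = initProj R[X] k - (X : R[X]) • tailProj R[X] k := by
  ext i c : 1
  have hne : i.succ ≠ i.castSucc := (Fin.castSucc_lt_succ (i := i)).ne'
  simp only [dualPencil, initProj, tailProj, of_apply, Matrix.sub_apply, Matrix.smul_apply,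
    submatrix_apply, id, one_apply, smul_eq_mul]
  rcases eq_or_ne c i.castSucc with rfl | h₁
  · simp [hne]
  rcases eq_or_ne c i.succ with rfl | h₂
  · simp [hne, hne.symm]
  · simp [h₁, h₂, h₁.symm, h₂.symm]

theorem det_monomialMatrix (k : ℕ) : (monomialMatrix R k).det = 1 := by
  have h : (monomialMatrix R k).IsUpperTriangular := fun i j hij => if_neg (not_le.mpr hij)
  rw [det_of_isUpperTriangular h]
  simp [monomialMatrix]

theorem monomialMatrix_apply_last (k : ℕ) (i : Fin (k + 1)) :
    monomialMatrix R k i (Fin.last k) = monomialVec R k i := by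
  simp [monomialMatrix, monomialVec, Fin.le_last]

theorem dualPencil_mul_monomialMatrix (k : ℕ) :
    dualPencil R k * monomialMatrix R k = initProj R[X] k := by
  rw [dualPencil_eq_initProj_sub, Matrix.sub_mul, Matrix.smul_mul, initProj_mul, tailProj_mul]
  ext i c : 1
  simp only [initProj, monomialMatrix, Matrix.sub_apply, Matrix.smul_apply, submatrix_apply, id,
    one_apply, of_apply, smul_eq_mul, Fin.le_def, Fin.ext_iff, Fin.val_castSucc, Fin.val_succ]
  rcases lt_trichotomy (i : ℕ) c with h | h | h
  · rw [if_pos h.le, if_pos (Nat.succ_le_of_lt h), if_neg h.ne, ← pow_succ', sub_eq_zero]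
    congr 1
    omega
  · simp [h]
  · rw [if_neg (by omega), if_neg (by omega), if_neg (by omega), mul_zero, sub_zero]

theorem transpose_mul_mul_monomialMatrix_last {m n : ℕ}
    (A : Matrix (Fin (m + 1)) (Fin (n + 1)) R[X]) :
    ((monomialMatrix R m)ᵀ * A * monomialMatrix R n) (Fin.last m) (Fin.last n) =
      monomialVec R m ⬝ᵥ A *ᵥ monomialVec R n := by
  have hrow : (monomialMatrix R m)ᵀ (Fin.last m) = monomialVec R m :=
    funext (monomialMatrix_apply_last m)
  rw [mul_apply', mul_apply_eq_vecMul, dotProduct_mulVec, hrow]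
  exact congrArg _ (funext (monomialMatrix_apply_last n))

/- Row `castSucc i` and column `inr i` go to the same index of `Fin (m + n)`, as do row `inr j`
and column `castSucc j`; both `last` indices go to the `1 × 1` block. -/
def pencilRowEquiv (m n : ℕ) : Fin (m + 1) ⊕ Fin n ≃ Fin (m + n) ⊕ Fin 1 :=
  (Equiv.sumCongr finSumFinEquiv.symm (Equiv.refl _)).trans <|
    (Equiv.sumAssoc _ _ _).trans <|
    (Equiv.sumCongr (Equiv.refl _) (Equiv.sumComm _ _)).trans <|
    (Equiv.sumAssoc _ _ _).symm.trans <|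
    Equiv.sumCongr finSumFinEquiv (Equiv.refl _)

def pencilColEquiv (m n : ℕ) : Fin (n + 1) ⊕ Fin m ≃ Fin (m + n) ⊕ Fin 1 :=
  (Equiv.sumCongr finSumFinEquiv.symm (Equiv.refl _)).trans <|
    (Equiv.sumComm _ _).trans <|
    (Equiv.sumAssoc _ _ _).symm.trans <|
    Equiv.sumCongr finSumFinEquiv (Equiv.refl _)

theorem fromBlocks_single_initProj_eq_reindex (m n : ℕ) (t : R) :
    fromBlocks (single (Fin.last m) (Fin.last n) t) (initProj R m)ᵀ (initProj R n) 0 =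
      reindex (pencilRowEquiv m n).symm (pencilColEquiv m n).symm (fromBlocks 1 0 0 !![t]) := by
  have last_ne {k : ℕ} (i : Fin k) : Fin.last k ≠ i.castSucc := (Fin.castSucc_ne_last i).symm
  have castAdd_ne (i : Fin m) (j : Fin n) : Fin.castAdd n i ≠ Fin.natAdd m j := by
    simp only [ne_eq, Fin.ext_iff, Fin.val_castAdd, Fin.val_natAdd]
    omega
  ext a b : 1
  rcases a with a | j <;> rcases b with b | i
  all_goals try induction a using Fin.lastCases
  all_goals try induction b using Fin.lastCases
  all_goals simp [pencilRowEquiv, pencilColEquiv, initProj, one_apply, last_ne, castAdd_ne,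
    (castAdd_ne _ _).symm]

end Pencil

theorem Unimodular.fromBlocks_one {ι : Type*} [Fintype ι] [DecidableEq ι] {r : ℕ}
    {E : Matrix ι ι F[X]} (hE : Unimodular E) :
    Unimodular (fromBlocks (1 : Matrix (Fin r) (Fin r) F[X]) 0 0 E) := by
  obtain ⟨c, hc, hdet⟩ := hE
  exact ⟨c, hc, by rw [det_fromBlocks_zero₂₁, det_one, one_mul, hdet]⟩

theorem IsLinearization.of_unimodular_mul_mul {ι₁ ι₂ κ : Type*} [Fintype ι₁] [DecidableEq ι₁]
    [Fintype ι₂] [DecidableEq ι₂] [Fintype κ] [DecidableEq κ] {s : ℕ}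
    {L : Matrix ι₁ ι₂ F[X]} {P : Matrix κ κ F[X]} {E : Matrix ι₁ ι₁ F[X]} {G : Matrix ι₂ ι₂ F[X]}
    (hE : Unimodular E) (hG : Unimodular G) (e₁ : ι₁ ≃ Fin s ⊕ κ) (e₂ : ι₂ ≃ Fin s ⊕ κ)
    (h : E * L * G = reindex e₁.symm e₂.symm (fromBlocks 1 0 0 P)) :
    IsLinearization L P := by
  refine ⟨0, s, fromBlocks 1 0 0 E, fromBlocks 1 0 0 G, (Equiv.emptySum _ _).trans e₁,
    (Equiv.emptySum _ _).trans e₂, hE.fromBlocks_one, hG.fromBlocks_one, ?_⟩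
  ext (a | a) (b | b) : 1
  · exact a.elim0
  · exact a.elim0
  · exact b.elim0
  · simp [fromBlocks_multiply, h]

theorem isLinearization_fromBlocks_dualPencil {m n : ℕ}
    (A : Matrix (Fin (m + 1)) (Fin (n + 1)) F[X]) :
    IsLinearization (fromBlocks A (dualPencil F m)ᵀ (dualPencil F n) 0)
      !![monomialVec F m ⬝ᵥ A *ᵥ monomialVec F n] := by
  set M := (monomialMatrix F m)ᵀ * A * monomialMatrix F n
  have hE : Unimodular (fromBlocks (monomialMatrix F m)ᵀ (-(M * (initProj F[X] n)ᵀ)) 0 1) :=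
    ⟨1, one_ne_zero, by
      rw [det_fromBlocks_zero₂₁, det_transpose, det_monomialMatrix, det_one, one_mul, C_1]⟩
  have hG : Unimodular (fromBlocks (monomialMatrix F n) 0
      (-(initProj F[X] m * (M * single (Fin.last n) (Fin.last n) (1 : F[X])))) 1) :=
    ⟨1, one_ne_zero, by rw [det_fromBlocks_zero₁₂, det_monomialMatrix, det_one, one_mul, C_1]⟩
  refine IsLinearization.of_unimodular_mul_mul hE hG (pencilRowEquiv m n) (pencilColEquiv m n) ?_
  rw [← transpose_mul_mul_monomialMatrix_last, ← fromBlocks_single_initProj_eq_reindex,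
    ← sub_mul_initProj_sub_initProj_mul_eq_single, fromBlocks_multiply, fromBlocks_multiply]
  have hm : (monomialMatrix F m)ᵀ * (dualPencil F m)ᵀ = (initProj F[X] m)ᵀ := by
    rw [← transpose_mul, dualPencil_mul_monomialMatrix]
  simp only [hm, Matrix.add_mul, Matrix.mul_assoc, dualPencil_mul_monomialMatrix, Matrix.zero_mul,
    Matrix.mul_zero, Matrix.one_mul, Matrix.mul_one, add_zero, zero_add, Matrix.neg_mul]
  congr 1
  simp only [M, Matrix.mul_assoc, Matrix.mul_neg, sub_eq_add_neg]

theorem statement9_general (ε η : ℕ)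
    (p q : Fin (ε + 1) → F) (r s : Fin (η + 1) → F) :
    let Lε : Matrix (Fin ε) (Fin (ε + 1)) (Polynomial F) :=
      Matrix.of fun i c =>
        if c = i.castSucc then 1 else if c = i.succ then -Polynomial.X else 0
    let Lη : Matrix (Fin η) (Fin (η + 1)) (Polynomial F) :=
      Matrix.of fun i c =>
        if c = i.castSucc then 1 else if c = i.succ then -Polynomial.X else 0
    let pP : Polynomial F := ∑ i, Polynomial.C (p i) * Polynomial.X ^ (ε - (i : ℕ))
    let qP : Polynomial F := ∑ i, Polynomial.C (q i) * Polynomial.X ^ (ε - (i : ℕ))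
    let rP : Polynomial F := ∑ i, Polynomial.C (r i) * Polynomial.X ^ (η - (i : ℕ))
    let sP : Polynomial F := ∑ i, Polynomial.C (s i) * Polynomial.X ^ (η - (i : ℕ))
    IsLinearization
      (Matrix.fromBlocks
        (Matrix.of fun (i : Fin (ε + 1)) (j : Fin (η + 1)) =>
          (Polynomial.C (p i * s j + q i * r j) : Polynomial F))
        Lεᵀ Lη 0)
      !![pP * sP + rP * qP] := by
  intro Lε Lη pP qP rP sP
  set A : Matrix (Fin (ε + 1)) (Fin (η + 1)) F[X] := of fun i j => C (p i * s j + q i * r j)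
  have hA : A = vecMulVec (C ∘ p) (C ∘ s) + vecMulVec (C ∘ q) (C ∘ r) := by
    ext i j : 1
    simp [A, vecMulVec_apply]
  have ht : monomialVec F ε ⬝ᵥ A *ᵥ monomialVec F η = pP * sP + rP * qP := by
    rw [hA, add_mulVec, dotProduct_add, dotProduct_mulVec, dotProduct_mulVec, vecMul_vecMulVec,
      vecMul_vecMulVec, smul_dotProduct, smul_dotProduct, smul_eq_mul, smul_eq_mul,
      dotProduct_comm _ (C ∘ p), dotProduct_comm _ (C ∘ q)]
    simp only [dotProduct, monomialVec, Function.comp_apply, pP, qP, rP, sP]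
    ring
  rw [← ht]
  exact isLinearization_fromBlocks_dualPencil A

/-- Linearization of `t(λ) = p(λ)s(λ) + r(λ)q(λ)` (the numerator of the sum of
two rational functions), all polynomials being given in the monomial basis. -/
theorem statement9 (ε η : ℕ) (hε : 1 ≤ ε) (hη : 1 ≤ η)
    (p q : Fin (ε + 1) → F) (r s : Fin (η + 1) → F) :
    let Lε : Matrix (Fin ε) (Fin (ε + 1)) (Polynomial F) :=
      Matrix.of fun i c =>
        if c = i.castSucc then 1 else if c = i.succ then -Polynomial.X else 0
    let Lη : Matrix (Fin η) (Fin (η + 1)) (Polynomial F) :=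
      Matrix.of fun i c =>
        if c = i.castSucc then 1 else if c = i.succ then -Polynomial.X else 0
    let pP : Polynomial F := ∑ i, Polynomial.C (p i) * Polynomial.X ^ (ε - (i : ℕ))
    let qP : Polynomial F := ∑ i, Polynomial.C (q i) * Polynomial.X ^ (ε - (i : ℕ))
    let rP : Polynomial F := ∑ i, Polynomial.C (r i) * Polynomial.X ^ (η - (i : ℕ))
    let sP : Polynomial F := ∑ i, Polynomial.C (s i) * Polynomial.X ^ (η - (i : ℕ))
    IsLinearization
      (Matrix.fromBlocks
        (Matrix.of fun (i : Fin (ε + 1)) (j : Fin (η + 1)) =>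
          (Polynomial.C (p i * s j + q i * r j) : Polynomial F))
        Lεᵀ Lη 0)
      !![pP * sP + rP * qP] :=
  statement9_general ε η p q r s

end PaperLin
end

section
/- Let 𝔽 be a field. Let φ = (φ_0,…,φ_ε) be a basis of the space of polynomials of degree at most ε and ψ = (ψ_0,…,ψ_η) a basis of the space of polynomials of degree at most η, admitting dual bases L_{ε,φ}(λ) ∈ 𝔽[λ]^{ε×(ε+1)} and L_{η,ψ}(λ) ∈ 𝔽[λ]^{η×(η+1)}. Let p, q ∈ 𝔽^{ε+1} and r, s ∈ 𝔽^{η+1} be coefficient vectors, and set p(λ) := pᵀ·π_{ε,φ}(λ), q(λ) := qᵀ·π_{ε,φ}(λ), r(λ) := rᵀ·π_{η,ψ}(λ), s(λ) := sᵀ·π_{η,ψ}(λ). Then the square matrix pencil ℒ(λ) := [[p·sᵀ + q·rᵀ, L_{ε,φ}(λ)ᵀ],[L_{η,ψ}(λ), 0]] of size ε+η+1 is a linearization for the scalar polynomial t(λ) := p(λ)·s(λ) + q(λ)·r(λ). -/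
/-!
A dual basis `L` of `π` is completed to a square pencil `U` by a constant last row `w` with
`w ⬝ π = 1` (the `π i` span the polynomials of degree `≤ k`), so that `U π = e_last`. Then
`det U • π` is the last column of `adj U`, whose entries are `k × k` minors of `L` and so have
degree `≤ k`; as some `π i` has degree exactly `k`, `det U` is a constant, nonzero because `L(0)` has
full rank. Thus `V = U⁻¹` is unimodular, `L V = [I | 0]` and the last column of `V` is `π`.
Multiplying `ℒ` by `diag(V_φᵀ, I)` and `diag(V_ψ, I)` turns its off-diagonal blocks into `[I; 0]`
and `[I | 0]` and the corner entry of the top-left block into `π_φᵀ A π_ψ = t`; the remaining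
entries of that block are eliminated against the identity blocks, leaving a permuted `diag(I, t)`.
-/

open Polynomial Matrix

namespace PaperLin

variable {F : Type*} [Field F]

theorem unimodular_iff_isUnit_det {ι : Type*} [Fintype ι] [DecidableEq ι]
    {E : Matrix ι ι F[X]} : Unimodular E ↔ IsUnit E.det := by
  simp [Unimodular, Polynomial.isUnit_iff, eq_comm]

theorem natDegree_det_le_of_degree_le_one {R : Type*} [CommRing R] {n : Type*} [Fintype n]
    [DecidableEq n] (A : Matrix n n R[X]) (h : ∀ i j, (A i j).degree ≤ 1) :
    A.det.natDegree ≤ Fintype.card n := by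
  have hA : A = (X : R[X]) • (A.map (coeff · 1)).map C + (A.map (coeff · 0)).map C := by
    ext i j : 1
    simp only [Matrix.add_apply, Matrix.smul_apply, map_apply, smul_eq_mul]
    rw [mul_comm]
    exact eq_X_add_C_of_degree_le_one (h i j)
  rw [hA]
  exact natDegree_det_X_add_C_le _ _

theorem natDegree_adjugate_apply_last_le {R : Type*} [CommRing R] {k : ℕ}
    (U : Matrix (Fin (k + 1)) (Fin (k + 1)) R[X]) (h : ∀ (i : Fin k) j, (U i.castSucc j).degree ≤ 1)
    (i : Fin (k + 1)) : (U.adjugate i (Fin.last k)).natDegree ≤ k := by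
  have hminor := natDegree_det_le_of_degree_le_one
    (U.submatrix (Fin.last k).succAbove i.succAbove) fun a b => by simpa using h a _
  rw [adjugate_fin_succ_eq_det_submatrix]
  rcases neg_one_pow_eq_or R[X] ((Fin.last k : ℕ) + i) with hs | hs <;> rw [hs] <;>
    simpa using hminor

theorem det_of_finSnoc_ne_zero {K : Type*} [Field K] {k : ℕ} {A : Matrix (Fin k) (Fin (k + 1)) K}
    (hA : A.rank = k) {v w : Fin (k + 1) → K} (hv : A *ᵥ v = 0) (hw : w ⬝ᵥ v ≠ 0) :
    (of (Fin.snoc A.row w)).det ≠ 0 := by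
  have hrows : LinearIndependent K A.row := by
    rw [rank_eq_finrank_span_row] at hA
    rw [linearIndependent_iff_card_eq_finrank_span, Fintype.card_fin]
    exact hA.symm
  have hw_span : w ∉ Submodule.span K (Set.range A.row) := by
    intro hmem
    refine hw (Submodule.span_induction (p := fun u _ => u ⬝ᵥ v = 0) ?_ ?_ ?_ ?_ hmem)
    · rintro _ ⟨i, rfl⟩
      exact congrFun hv i
    · simp
    · intro x y _ _ hx hy
      simp [add_dotProduct, hx, hy]
    · intro c x _ hx
      simp [smul_dotProduct, hx]
  have hsnoc : LinearIndependent K (of (Fin.snoc A.row w)).row :=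
    linearIndependent_finSnoc.2 ⟨hrows, hw_span⟩
  exact (isUnit_iff_isUnit_det _).1 (linearIndependent_rows_iff_isUnit.1 hsnoc) |>.ne_zero

theorem span_range_eq_degreeLT {n : ℕ} {π : Fin n → F[X]} (hdeg : ∀ i, (π i).degree < n)
    (hind : LinearIndependent F π) : Submodule.span F (Set.range π) = degreeLT F n := by
  refine Submodule.eq_of_le_of_finrank_eq
    (Submodule.span_le.2 (Set.range_subset_iff.2 fun i => mem_degreeLT.2 (hdeg i))) ?_
  rw [finrank_span_eq_card hind, (degreeLTEquiv F n).finrank_eq]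
  simp

theorem exists_le_natDegree_of_span_eq_degreeLT {ι : Type*} {k : ℕ} {π : ι → F[X]}
    (h : Submodule.span F (Set.range π) = degreeLT F (k + 1)) : ∃ j, k ≤ (π j).natDegree := by
  by_contra! hlt
  have hle : Submodule.span F (Set.range π) ≤ degreeLT F k :=
    Submodule.span_le.2 <| Set.range_subset_iff.2 fun i =>
      mem_degreeLT.2 (degree_le_natDegree.trans_lt (by exact_mod_cast hlt i))
  have hXk : (X ^ k : F[X]) ∈ degreeLT F k := by
    refine hle (h ▸ mem_degreeLT.2 ?_)
    rw [degree_X_pow]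
    exact_mod_cast k.lt_succ_self
  simp [mem_degreeLT] at hXk

theorem IsDualBasis.det_finSnoc_ne_zero {k : ℕ} {L : Matrix (Fin k) (Fin (k + 1)) F[X]}
    {π : Fin (k + 1) → F[X]} (hL : IsDualBasis L π) {w : Fin (k + 1) → F}
    (hw : ∑ i, w i • π i = 1) : (of (Fin.snoc L.row fun j => C (w j))).det ≠ 0 := by
  have hU0 : (of (Fin.snoc L.row fun j => C (w j))).map (eval 0) =
      of (Fin.snoc (L.map (eval 0)).row w) := by
    ext a b : 1
    cases a using Fin.lastCases <;> simp
  have hv : L.map (eval 0) *ᵥ (eval 0 ∘ π) = 0 := by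
    ext i
    rw [← coe_evalRingHom, ← RingHom.map_mulVec, hL.2.1]
    simp
  have hw' : w ⬝ᵥ (eval 0 ∘ π) = 1 := by
    simpa [dotProduct, eval_finsetSum] using congrArg (eval 0) hw
  intro h0
  refine det_of_finSnoc_ne_zero (w := w) (hL.2.2 0) hv (by rw [hw']; exact one_ne_zero) ?_
  rw [← hU0, ← coe_evalRingHom, ← RingHom.mapMatrix_apply, ← RingHom.map_det, h0, map_zero]

theorem IsDualBasis.exists_unimodular_completion {k : ℕ} {L : Matrix (Fin k) (Fin (k + 1)) F[X]}
    {π : Fin (k + 1) → F[X]} (hL : IsDualBasis L π) (hdeg : ∀ i, (π i).degree ≤ k)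
    (hind : LinearIndependent F π) :
    ∃ U : Matrix (Fin (k + 1)) (Fin (k + 1)) F[X],
      Unimodular U ∧ U.submatrix Fin.castSucc id = L ∧ U *ᵥ π = Pi.single (Fin.last k) 1 := by
  have hspan : Submodule.span F (Set.range π) = degreeLT F (k + 1) :=
    span_range_eq_degreeLT (fun i => (hdeg i).trans_lt (by exact_mod_cast k.lt_succ_self)) hind
  obtain ⟨w, hw⟩ : ∃ w : Fin (k + 1) → F, ∑ i, w i • π i = 1 := by
    rw [← Submodule.mem_span_range_iff_exists_fun, hspan, mem_degreeLT, degree_one]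
    exact_mod_cast k.succ_pos
  obtain ⟨j, hj⟩ := exists_le_natDegree_of_span_eq_degreeLT hspan
  let U : Matrix (Fin (k + 1)) (Fin (k + 1)) F[X] :=
    of (Fin.snoc L.row fun j => C (w j))
  have hUπ : U *ᵥ π = Pi.single (Fin.last k) 1 := by
    ext1 i
    cases i using Fin.lastCases with
    | last => simp [U, mulVec, dotProduct, ← hw, smul_eq_C_mul]
    | cast i => simpa [U, mulVec, dotProduct] using congrFun hL.2.1 i
  have hdet_mul (i : Fin (k + 1)) : U.det * π i = U.adjugate i (Fin.last k) := by
    have := congrFun (congrArg (U.adjugate *ᵥ ·) hUπ) i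
    simpa [mulVec_mulVec, adjugate_mul, smul_mulVec] using this
  have hdet_ne : U.det ≠ 0 := hL.det_finSnoc_ne_zero hw
  have hdet_natDegree : U.det.natDegree = 0 := by
    have hadj := natDegree_adjugate_apply_last_le U (fun a b => by simpa [U] using hL.1 a b) j
    rw [← hdet_mul, natDegree_mul hdet_ne (hind.ne_zero j)] at hadj
    omega
  refine ⟨U, unimodular_iff_isUnit_det.2 ?_, ?_, hUπ⟩
  · rw [isUnit_iff_degree_eq_zero, degree_eq_natDegree hdet_ne, hdet_natDegree]
    rfl
  · ext a b : 1
    simp [U]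

theorem IsDualBasis.exists_unimodular_inverse_completion {k : ℕ}
    {L : Matrix (Fin k) (Fin (k + 1)) F[X]} {π : Fin (k + 1) → F[X]} (hL : IsDualBasis L π)
    (hdeg : ∀ i, (π i).degree ≤ k) (hind : LinearIndependent F π) :
    ∃ V : Matrix (Fin (k + 1)) (Fin (k + 1)) F[X], Unimodular V ∧
      L * V = (1 : Matrix (Fin (k + 1)) (Fin (k + 1)) F[X]).submatrix Fin.castSucc id ∧
      ∀ i, V i (Fin.last k) = π i := by
  obtain ⟨U, hU, hUL, hUπ⟩ := hL.exists_unimodular_completion hdeg hind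
  have hdet := unimodular_iff_isUnit_det.1 hU
  refine ⟨U⁻¹, unimodular_iff_isUnit_det.2 (isUnit_nonsing_inv_det U hdet), ?_, fun i => ?_⟩
  · rw [← hUL, ← mul_nonsing_inv U hdet, submatrix_mul _ _ _ id _ Function.bijective_id,
      submatrix_id_id]
  · have := congrFun (congrArg (U⁻¹ *ᵥ ·) hUπ) i
    simpa [mulVec_mulVec, nonsing_inv_mul U hdet] using this.symm

section IsLinearization

variable {ι₁ ι₂ κ : Type*} [Fintype ι₁] [DecidableEq ι₁] [Fintype ι₂] [DecidableEq ι₂]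
  [Fintype κ] [DecidableEq κ]

theorem IsLinearization.of_mul_mul {M : Matrix ι₁ ι₂ F[X]} {P : Matrix κ κ F[X]}
    {E : Matrix ι₁ ι₁ F[X]} {G : Matrix ι₂ ι₂ F[X]} (hE : Unimodular E) (hG : Unimodular G)
    (h : IsLinearization (E * M * G) P) : IsLinearization M P := by
  obtain ⟨r, s, E', G', e₁, e₂, hE', hG', hEG⟩ := h
  refine ⟨r, s, E' * fromBlocks 1 0 0 E, fromBlocks 1 0 0 G * G', e₁, e₂, ?_, ?_, ?_⟩
  · rw [unimodular_iff_isUnit_det] at *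
    simpa [det_fromBlocks_zero₂₁] using hE'.mul hE
  · rw [unimodular_iff_isUnit_det] at *
    simpa [det_fromBlocks_zero₂₁] using hG.mul hG'
  · have : fromBlocks (1 : Matrix (Fin r) (Fin r) F[X]) 0 0 (E * M * G) =
        fromBlocks (1 : Matrix (Fin r) (Fin r) F[X]) 0 0 E *
          fromBlocks (1 : Matrix (Fin r) (Fin r) F[X]) 0 0 M *
          fromBlocks (1 : Matrix (Fin r) (Fin r) F[X]) 0 0 G := by
      simp [fromBlocks_multiply]
    rw [← hEG, this]
    simp only [Matrix.mul_assoc]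

theorem isLinearization_of_submatrix_eq_diagonal (M : Matrix ι₁ ι₂ F[X]) (σ : ι₁ ≃ ι₂)
    (i₀ : ι₁) (t : F[X]) (h : M.submatrix id σ = diagonal (Function.update (1 : ι₁ → F[X]) i₀ t)) :
    IsLinearization M !![t] := by
  let e : ι₁ ≃ Fin (Fintype.card {i // i ≠ i₀}) ⊕ Fin 1 :=
    (Equiv.optionSubtypeNe i₀).symm.trans <| (Equiv.optionEquivSumPUnit.{0} _).trans <|
      Equiv.sumCongr (Fintype.equivFin _) (Equiv.ofUnique _ _)
  have he : Sum.elim (1 : Fin _ → F[X]) ![t] ∘ e = Function.update (1 : ι₁ → F[X]) i₀ t := by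
    funext i
    by_cases hi : i = i₀
    · subst hi; simp [e]
    · simp [e, hi, Equiv.optionSubtypeNe_symm_of_ne hi]
  refine ⟨0, _, 1, 1, (Equiv.emptySum _ _).trans e, (Equiv.emptySum _ _).trans (σ.symm.trans e),
    ⟨1, one_ne_zero, by simp⟩, ⟨1, one_ne_zero, by simp⟩, ?_⟩
  have hdiag : fromBlocks (1 : Matrix (Fin (Fintype.card {i // i ≠ i₀})) _ F[X]) 0 0 !![t] =
      diagonal (Sum.elim 1 ![t]) := by
    ext (i | i) (j | j) <;> simp [one_apply, diagonal_apply, Fin.fin_one_eq_zero]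
  ext (i | i) (j | j)
  · exact i.elim0
  · exact i.elim0
  · exact j.elim0
  have hM : M i j = diagonal (Function.update (1 : ι₁ → F[X]) i₀ t) i (σ.symm j) := by
    rw [← h]; simp
  simp [hM, hdiag, diagonal_apply, ← he]

end IsLinearization

theorem isLinearization_fromBlocks_one_submatrix {ε η : ℕ}
    (B : Matrix (Fin (ε + 1)) (Fin (η + 1)) F[X]) :
    IsLinearization
      (fromBlocks B ((1 : Matrix (Fin (ε + 1)) (Fin (ε + 1)) F[X]).submatrix id Fin.castSucc)
        ((1 : Matrix (Fin (η + 1)) (Fin (η + 1)) F[X]).submatrix Fin.castSucc id) 0)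
      !![B (Fin.last ε) (Fin.last η)] := by
  set J := (1 : Matrix (Fin (ε + 1)) (Fin (ε + 1)) F[X]).submatrix id Fin.castSucc
  set K := (1 : Matrix (Fin (η + 1)) (Fin (η + 1)) F[X]).submatrix Fin.castSucc id
  -- `Y * K` and `J * X` reproduce the last row and the other rows of `B`, except its corner.
  let X := B.submatrix Fin.castSucc id
  let Y : Matrix (Fin (ε + 1)) (Fin η) F[X] :=
    of fun i l => if i = Fin.last ε then B i l.castSucc else 0
  have hE : Unimodular (fromBlocks 1 (-Y) 0 1) :=
    unimodular_iff_isUnit_det.2 (by simp)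
  have hG : Unimodular (fromBlocks 1 0 (-X) 1) :=
    unimodular_iff_isUnit_det.2 (by simp)
  refine IsLinearization.of_mul_mul hE hG ?_
  have hEG : (fromBlocks 1 (-Y) 0 1 : Matrix (Fin (ε + 1) ⊕ Fin η) (Fin (ε + 1) ⊕ Fin η) F[X]) *
      (fromBlocks B J K 0 : Matrix (Fin (ε + 1) ⊕ Fin η) (Fin (η + 1) ⊕ Fin ε) F[X]) *
      (fromBlocks 1 0 (-X) 1 : Matrix (Fin (η + 1) ⊕ Fin ε) (Fin (η + 1) ⊕ Fin ε) F[X]) =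
      fromBlocks (B - Y * K - J * X) J K 0 := by
    simp [fromBlocks_multiply, sub_eq_add_neg]
  rw [hEG]
  -- `σ` pairs each row of the eliminated pencil with the column of its only nonzero entry.
  let σ : Fin (ε + 1) ⊕ Fin η ≃ Fin (η + 1) ⊕ Fin ε :=
    (Equiv.sumCongr finSumFinEquiv.symm (Equiv.refl _)).trans <| (Equiv.sumComm _ _).trans <|
      ((Equiv.refl _).sumCongr (Equiv.sumComm _ _)).trans <| (Equiv.sumAssoc _ _ _).symm.trans <|
        Equiv.sumCongr finSumFinEquiv (Equiv.refl _)
  have hσ₁ (i : Fin ε) : σ (Sum.inl i.castSucc) = Sum.inr i := by simp [σ]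
  have hσ₂ : σ (Sum.inl (Fin.last ε)) = Sum.inl (Fin.last η) := by simp [σ]; rfl
  have hσ₃ (l : Fin η) : σ (Sum.inr l) = Sum.inl l.castSucc := by simp [σ]; rfl
  refine isLinearization_of_submatrix_eq_diagonal _ σ (Sum.inl (Fin.last ε)) _ ?_
  ext (i | l) (j | l') : 1 <;>
    [cases i using Fin.lastCases <;> cases j using Fin.lastCases; cases i using Fin.lastCases;
      cases j using Fin.lastCases; skip] <;>
    simp [hσ₁, hσ₂, hσ₃, J, K, X, Y, mul_apply, one_apply, diagonal_apply, Fin.castSucc_ne_last,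
      (Fin.castSucc_ne_last _).symm]

theorem isLinearization_fromBlocks_of_mul_eq_submatrix_one {ε η : ℕ}
    (A : Matrix (Fin (ε + 1)) (Fin (η + 1)) F[X])
    {Lφ : Matrix (Fin ε) (Fin (ε + 1)) F[X]} {Lψ : Matrix (Fin η) (Fin (η + 1)) F[X]}
    {Vφ : Matrix (Fin (ε + 1)) (Fin (ε + 1)) F[X]} {Vψ : Matrix (Fin (η + 1)) (Fin (η + 1)) F[X]}
    (hVφ : Unimodular Vφ) (hVψ : Unimodular Vψ)
    (hLφ : Lφ * Vφ = (1 : Matrix (Fin (ε + 1)) (Fin (ε + 1)) F[X]).submatrix Fin.castSucc id)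
    (hLψ : Lψ * Vψ = (1 : Matrix (Fin (η + 1)) (Fin (η + 1)) F[X]).submatrix Fin.castSucc id) :
    IsLinearization (fromBlocks A Lφᵀ Lψ 0) !![(Vφᵀ * A * Vψ) (Fin.last ε) (Fin.last η)] := by
  have hE : Unimodular (fromBlocks Vφᵀ 0 0 1 : Matrix (Fin (ε + 1) ⊕ Fin η) _ F[X]) := by
    rw [unimodular_iff_isUnit_det] at hVφ ⊢
    simpa [det_fromBlocks_zero₂₁] using hVφ
  have hG : Unimodular (fromBlocks Vψ 0 0 1 : Matrix (Fin (η + 1) ⊕ Fin ε) _ F[X]) := by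
    rw [unimodular_iff_isUnit_det] at hVψ ⊢
    simpa [det_fromBlocks_zero₂₁] using hVψ
  refine IsLinearization.of_mul_mul hE hG ?_
  have hJ : Vφᵀ * Lφᵀ =
      (1 : Matrix (Fin (ε + 1)) (Fin (ε + 1)) F[X]).submatrix id Fin.castSucc := by
    rw [← transpose_mul, hLφ, transpose_submatrix, transpose_one]
  simpa [fromBlocks_multiply, hJ, hLψ, Matrix.mul_assoc] using
    isLinearization_fromBlocks_one_submatrix (Vφᵀ * A * Vψ)

/-- Linearization of `t(λ) = p(λ)s(λ) + q(λ)r(λ)` where `p, q` are expressed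
in a basis `φ` of the polynomials of degree at most `ε` and `r, s` in a basis
`ψ` of the polynomials of degree at most `η`. -/
theorem statement10 (ε η : ℕ)
    (φ : Fin (ε + 1) → Polynomial F) (ψ : Fin (η + 1) → Polynomial F)
    (hφdeg : ∀ i, (φ i).degree ≤ (ε : ℕ)) (hφind : LinearIndependent F φ)
    (hψdeg : ∀ i, (ψ i).degree ≤ (η : ℕ)) (hψind : LinearIndependent F ψ)
    (Lφ : Matrix (Fin ε) (Fin (ε + 1)) (Polynomial F))
    (Lψ : Matrix (Fin η) (Fin (η + 1)) (Polynomial F))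
    (hφ : IsDualBasis Lφ fun i => φ i.rev)
    (hψ : IsDualBasis Lψ fun i => ψ i.rev)
    (p q : Fin (ε + 1) → F) (r s : Fin (η + 1) → F) :
    let pP : Polynomial F := ∑ i, Polynomial.C (p i) * φ i.rev
    let qP : Polynomial F := ∑ i, Polynomial.C (q i) * φ i.rev
    let rP : Polynomial F := ∑ i, Polynomial.C (r i) * ψ i.rev
    let sP : Polynomial F := ∑ i, Polynomial.C (s i) * ψ i.rev
    IsLinearization
      (Matrix.fromBlocks
        (Matrix.of fun (i : Fin (ε + 1)) (j : Fin (η + 1)) =>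
          (Polynomial.C (p i * s j + q i * r j) : Polynomial F))
        Lφᵀ Lψ 0)
      !![pP * sP + qP * rP] := by
  intro pP qP rP sP
  obtain ⟨Vφ, hVφ, hLφ, hπφ⟩ := hφ.exists_unimodular_inverse_completion (fun i => hφdeg _)
    (hφind.comp _ Fin.rev_injective)
  obtain ⟨Vψ, hVψ, hLψ, hπψ⟩ := hψ.exists_unimodular_inverse_completion (fun i => hψdeg _)
    (hψind.comp _ Fin.rev_injective)
  have ht : (Vφᵀ * of (fun i j => C (p i * s j + q i * r j)) * Vψ) (Fin.last ε) (Fin.last η) =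
      pP * sP + qP * rP := by
    simp only [mul_apply, transpose_apply, hπφ, hπψ, of_apply, Finset.sum_mul]
    rw [Finset.sum_comm]
    simp only [pP, qP, rP, sP, Finset.sum_mul_sum, ← Finset.sum_add_distrib]
    refine Finset.sum_congr rfl fun i _ => Finset.sum_congr rfl fun j _ => ?_
    simp only [C_add, C_mul]
    ring
  rw [← ht]
  exact isLinearization_fromBlocks_of_mul_eq_submatrix_one _ hVφ hVψ hLφ hLψ

end PaperLin
end

section
/- Let 𝔽 be a field, m ≥ 1, k ≥ 1, and let M ∈ 𝔽^{km×km} be partitioned into m×m blocks M_{i,j}, 1 ≤ i,j ≤ k. For an integer d, define the d-th block diagonal sum bsd_m(M, d) := Σ_{j−i = d} M_{i,j} ∈ 𝔽^{m×m} (the sum over all block positions (i,j) with 1 ≤ i,j ≤ k and j − i = d, equal to the zero matrix when no such positions exist). Then the m×m matrix polynomial P(λ) := ((λ^{k−1}, λ^{k−2}, …, 1) ⊗ I_m)·(λM + Mᵀ)·((1, λ, …, λ^{k−1})ᵀ ⊗ I_m) has grade 2k−1 and its coefficients satisfy, for every j = 0, …, 2k−1: P_j = bsd_m(M, j−k) +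 (bsd_m(M, k−j−1))ᵀ. -/
open Polynomial Matrix

namespace PaperLin

variable {F : Type*} [Field F]

/-- The coefficients of
`P(λ) = ((λ^{k-1},…,1) ⊗ I_m) (λM + Mᵀ) ((1,λ,…,λ^{k-1})ᵀ ⊗ I_m)`
are the block diagonal sums `P_j = bsd_m(M, j-k) + bsd_m(M, k-j-1)ᵀ`. -/
theorem statement17 (m k : ℕ) (hm : 1 ≤ m) (hk : 1 ≤ k)
    (M : Matrix (Fin k × Fin m) (Fin k × Fin m) F) :
    let bsd : ℤ → Matrix (Fin m) (Fin m) F := fun d =>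
      ∑ i : Fin k, ∑ j : Fin k,
        if (j : ℤ) - (i : ℤ) = d then Matrix.of (fun a b => M (i, a) (j, b)) else 0
    let R : Matrix (Fin m) (Fin k × Fin m) (Polynomial F) :=
      Matrix.of fun a p => if p.2 = a then Polynomial.X ^ (k - 1 - (p.1 : ℕ)) else 0
    let Cv : Matrix (Fin k × Fin m) (Fin m) (Polynomial F) :=
      Matrix.of fun p b => if p.2 = b then Polynomial.X ^ (p.1 : ℕ) else 0
    let P : Matrix (Fin m) (Fin m) (Polynomial F) :=
      R * ((Polynomial.X : Polynomial F) • M.map Polynomial.C + Mᵀ.map Polynomial.C) * Cv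
    (∀ a b, (P a b).degree ≤ ((2 * k - 1 : ℕ) : WithBot ℕ)) ∧
    ∀ j : ℕ, j ≤ 2 * k - 1 →
      (Matrix.of fun a b => (P a b).coeff j) =
        bsd ((j : ℤ) - (k : ℤ)) + (bsd ((k : ℤ) - (j : ℤ) - 1))ᵀ := by
  intro bsd R Cv P
  have hP : ∀ a b, P a b = ∑ i : Fin k, ∑ j : Fin k,
      (C (M (i,a) (j,b)) * X ^ (k - 1 - (i:ℕ) + (j:ℕ) + 1)
       + C (M (j,b) (i,a)) * X ^ (k - 1 - (i:ℕ) + (j:ℕ))) := by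
    intro a b
    simp only [P, R, Cv, Matrix.mul_apply, Matrix.add_apply, Matrix.smul_apply, Matrix.map_apply,
      Matrix.transpose_apply, Matrix.of_apply, smul_eq_mul, Fintype.sum_prod_type,
      ite_mul, mul_ite, zero_mul, mul_zero, Finset.sum_ite_eq, Finset.sum_ite_eq',
      Finset.mem_univ, if_true]
    simp only [Finset.sum_mul]
    rw [Finset.sum_comm]
    refine Finset.sum_congr rfl fun i _ => Finset.sum_congr rfl fun j _ => ?_
    rw [pow_add, pow_add, pow_succ]
    ring
  constructor
  · intro a b
    rw [hP]
    refine (Polynomial.degree_sum_le _ _).trans ?_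
    rw [Finset.sup_le_iff]
    intro i _
    refine (Polynomial.degree_sum_le _ _).trans ?_
    rw [Finset.sup_le_iff]
    intro j _
    refine (Polynomial.degree_add_le _ _).trans ?_
    have hi := i.isLt
    have hj := j.isLt
    rw [sup_le_iff]
    constructor
    · refine (Polynomial.degree_C_mul_X_pow_le _ _).trans ?_
      have h1 : k - 1 - (i:ℕ) + (j:ℕ) + 1 ≤ 2 * k - 1 := by omega
      exact_mod_cast h1
    · refine (Polynomial.degree_C_mul_X_pow_le _ _).trans ?_
      have h2 : k - 1 - (i:ℕ) + (j:ℕ) ≤ 2 * k - 1 := by omega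
      exact_mod_cast h2
  · intro n hn
    ext a b
    simp only [Matrix.of_apply, hP, Polynomial.finset_sum_coeff, Polynomial.coeff_add,
      Polynomial.coeff_C_mul, Polynomial.coeff_X_pow, mul_ite, mul_one, mul_zero,
      Matrix.add_apply, Matrix.transpose_apply, bsd, Finset.sum_apply,
      Matrix.sum_apply, ite_apply, Matrix.zero_apply]
    simp only [Finset.sum_add_distrib]
    congr 1
    · refine Finset.sum_congr rfl fun i _ => Finset.sum_congr rfl fun j _ => ?_
      have hi := i.isLt
      have hj := j.isLt
      have h3 : ((j:ℤ) - (i:ℤ) = (n:ℤ) - (k:ℤ)) ↔ (n = k - 1 - (i:ℕ) + (j:ℕ) + 1) := by omega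
      simp only [h3]
      split <;> simp [Matrix.of_apply]
    · rw [Finset.sum_comm]
      refine Finset.sum_congr rfl fun j _ => Finset.sum_congr rfl fun i _ => ?_
      have hi := i.isLt
      have hj := j.isLt
      have h4 : ((i:ℤ) - (j:ℤ) = (k:ℤ) - (n:ℤ) - 1) ↔ (n = k - 1 - (i:ℕ) + (j:ℕ)) := by omega
      simp only [h4]
      split <;> simp [Matrix.of_apply]

end PaperLin
end
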